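/- Let S be a (not necessarily commutative) bipotent semiring with elements of unbounded multiplicative order, i.e. for every k ∈ ℕ there exists x ∈ S whose multiplicative order exceeds k. Then for every n ≥ 2 the semigroups M_n(S) and UT_n(S) are not strongly permutable, and U_n(S) is not strongly permutable if and only if n ≥ 3. -/

import Mathlib

set_option maxHeartbeats 1000000

universe u

/-! ### Semiring classes.

A *semiring* here is a nonempty set with an associative commutative addition and an
associative multiplication which distributes over addition on both sides; no zero or
identity element is assumed. -/

class PlainSemiring (S : Type u) extends Add S, Mul S where
  nonempty' : Nonempty S
  add_assoc' : ∀ a b c : S, a + b + c = a + (b + c)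
  add_comm' : ∀ a b : S, a + b = b + a
  mul_assoc' : ∀ a b c : S, a * b * c = a * (b * c)
  left_distrib' : ∀ a b c : S, a * (b + c) = a * b + a * c
  right_distrib' : ∀ a b c : S, (a + b) * c = a * c + b * c

/-- A bipotent semiring: `x + y` is always either `x` or `y`.
(The induced total order is given by `x ≤ y ↔ x + y = y`.) -/
class BipotentSemiring (S : Type u) extends PlainSemiring S where
  bipotent : ∀ a b : S, a + b = a ∨ a + b = b

/-- A commutative bipotent semiring. -/
class CommBipotentSemiring (S : Type u) extends BipotentSemiring S where
  mul_comm' : ∀ a b : S, a * b = b * a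

/-- `mpow a n` is the `(n+1)`-st power of `a`, so the set of positive powers of `a`
is exactly `Set.range (mpow a)`, and the multiplicative order of `a` is the
cardinality of `Set.range (mpow a)`. -/
def mpow {S : Type*} [Mul S] (a : S) : ℕ → S
  | 0 => a
  | n + 1 => mpow a n * a

lemma mpow_mul_mpow {S : Type*} [PlainSemiring S] (a : S) (m n : ℕ) :
    mpow a m * mpow a n = mpow a (m + n + 1) := by
  induction n with
  | zero => rfl
  | succ n ih =>
    show mpow a m * (mpow a n * a) = mpow a (m + n + 1) * a
    rw [← PlainSemiring.mul_assoc', ih]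

/-! ### Products of finite families, and permutability. -/

/-- Fold step used to define sums/products of possibly empty families in a structure
with no neutral element; the overall fold is `none` iff the family is empty. -/
def optStep {S : Type*} (op : S → S → S) : Option S → S → Option S :=
  fun acc x => some (acc.elim x (fun a => op a x))

/-- The sum `s 0 + s 1 + ⋯` of a finite family, as an `Option` (`none` iff `k = 0`). -/
def finSum {S : Type*} [Add S] {k : ℕ} (s : Fin k → S) : Option S :=
  (List.ofFn s).foldl (optStep (· + ·)) none

/-- The product `s 0 * s 1 * ⋯` of a finite family, as an `Option` (`none` iff `k = 0`). -/
def finProd {S : Type*} [Mul S] {k : ℕ} (s : Fin k → S) : Option S :=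
  (List.ofFn s).foldl (optStep (· * ·)) none

/-- A multiplicative structure is `k`-permutable if every product of `k` elements is
preserved by some non-identity permutation of its factors. -/
def KPermutable (S : Type*) [Mul S] (k : ℕ) : Prop :=
  ∀ s : Fin k → S, ∃ σ : Equiv.Perm (Fin k), σ ≠ Equiv.refl (Fin k) ∧
    finProd (fun i => s (σ i)) = finProd s

/-- A semigroup is strongly permutable if it is `k`-permutable for some `k ≥ 2`. -/
def StronglyPermutable (S : Type*) [Mul S] : Prop :=
  ∃ k : ℕ, 2 ≤ k ∧ KPermutable S k

/-- A semigroup is weakly permutable if for some `k ≥ 2`, any product of `k` elements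
is computed identically by two distinct permutations of its factors. -/
def WeaklyPermutable (S : Type*) [Mul S] : Prop :=
  ∃ k : ℕ, 2 ≤ k ∧ ∀ s : Fin k → S, ∃ σ τ : Equiv.Perm (Fin k), σ ≠ τ ∧
    finProd (fun i => s (σ i)) = finProd (fun i => s (τ i))

/-- Isomorphism of semirings (bijection preserving addition and multiplication). -/
def RingLikeIso (S T : Type*) [Add S] [Mul S] [Add T] [Mul T] : Prop :=
  ∃ f : S → T, Function.Bijective f ∧ (∀ a b : S, f (a + b) = f a + f b) ∧
    (∀ a b : S, f (a * b) = f a * f b)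

/-! ### Matrices. -/

/-- Square `n × n` matrices over `S`. -/
def MatSR (S : Type u) (n : ℕ) : Type u := Fin n → Fin n → S

/-- Matrix multiplication, `(A*B) i j = Σ_k (A i k * B k j)`.  (For `n ≥ 1` — the only
case of interest — the `getD` default value is never used.) -/
def matMul {S : Type*} [Add S] [Mul S] {n : ℕ} (A B : MatSR S n) : MatSR S n :=
  fun i j => (finSum (fun k : Fin n => A i k * B k j)).getD (A i j * B i j)

/-- The multiplicative semigroup `M_n(S)`. -/
instance {S : Type*} [Add S] [Mul S] {n : ℕ} : Mul (MatSR S n) := ⟨matMul⟩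

/-! ### `S⁰`: adjoining a zero, and upper triangular matrices. -/

/-- `S` with a zero (additively neutral, multiplicatively absorbing) element adjoined. -/
inductive Adj0 (S : Type u) : Type u
  | zero : Adj0 S
  | elem : S → Adj0 S

namespace Adj0

def add' {S : Type*} [Add S] : Adj0 S → Adj0 S → Adj0 S
  | .zero, b => b
  | .elem a, .zero => .elem a
  | .elem a, .elem b => .elem (a + b)

def mul' {S : Type*} [Mul S] : Adj0 S → Adj0 S → Adj0 S
  | .zero, _ => .zero
  | .elem _, .zero => .zero
  | .elem a, .elem b => .elem (a * b)

instance {S : Type*} [Add S] : Add (Adj0 S) := ⟨add'⟩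
instance {S : Type*} [Mul S] : Mul (Adj0 S) := ⟨mul'⟩

@[simp] lemma zero_add {S : Type*} [Add S] (b : Adj0 S) : (zero : Adj0 S) + b = b := rfl
@[simp] lemma add_zero {S : Type*} [Add S] (a : Adj0 S) : a + (zero : Adj0 S) = a := by
  cases a <;> rfl
@[simp] lemma elem_add_elem {S : Type*} [Add S] (a b : S) :
    (elem a : Adj0 S) + elem b = elem (a + b) := rfl
@[simp] lemma zero_mul {S : Type*} [Mul S] (b : Adj0 S) : (zero : Adj0 S) * b = zero := rfl
@[simp] lemma mul_zero {S : Type*} [Mul S] (a : Adj0 S) : a * (zero : Adj0 S) = zero := by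
  cases a <;> rfl
@[simp] lemma elem_mul_elem {S : Type*} [Mul S] (a b : S) :
    (elem a : Adj0 S) * elem b = elem (a * b) := rfl

lemma add_eq_zero_iff {S : Type*} [Add S] (a b : Adj0 S) :
    a + b = zero ↔ a = zero ∧ b = zero := by
  cases a <;> cases b <;> simp

end Adj0

lemma foldl_optStep_adj0 {S : Type*} [Add S] (l : List (Adj0 S)) (a : Adj0 S) :
    ∃ c : Adj0 S, l.foldl (optStep (· + ·)) (some a) = some c ∧
      (c = Adj0.zero ↔ a = Adj0.zero ∧ ∀ x ∈ l, x = Adj0.zero) := by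
  induction l generalizing a with
  | nil => exact ⟨a, rfl, by simp⟩
  | cons x l ih =>
    obtain ⟨c, hc, hiff⟩ := ih (a + x)
    refine ⟨c, ?_, ?_⟩
    · simpa [optStep] using hc
    · rw [hiff, Adj0.add_eq_zero_iff]
      simp only [List.mem_cons, forall_eq_or_imp]
      tauto

lemma finSum_adj0_eq_zero {S : Type*} [Add S] {n : ℕ} (f : Fin n → Adj0 S) (i : Fin n)
    (d : Adj0 S) (h : ∀ k, f k = Adj0.zero) : (finSum f).getD d = Adj0.zero := by
  cases n with
  | zero => exact i.elim0
  | succ m =>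
    rw [finSum, List.ofFn_succ, List.foldl_cons]
    obtain ⟨c, hc, hiff⟩ := foldl_optStep_adj0 (List.ofFn fun i : Fin m => f i.succ) (f 0)
    rw [show optStep (· + ·) none (f 0) = some (f 0) from rfl, hc]
    have : c = Adj0.zero := hiff.mpr ⟨h 0, by
      intro x hx
      rw [List.mem_ofFn] at hx
      obtain ⟨j, rfl⟩ := hx
      exact h _⟩
    simp [this]

lemma finSum_adj0_ne_zero {S : Type*} [Add S] {n : ℕ} (f : Fin n → Adj0 S) (i : Fin n)
    (d : Adj0 S) (h : f i ≠ Adj0.zero) : (finSum f).getD d ≠ Adj0.zero := by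
  cases n with
  | zero => exact i.elim0
  | succ m =>
    rw [finSum, List.ofFn_succ, List.foldl_cons]
    obtain ⟨c, hc, hiff⟩ := foldl_optStep_adj0 (List.ofFn fun i : Fin m => f i.succ) (f 0)
    rw [show optStep (· + ·) none (f 0) = some (f 0) from rfl, hc]
    simp only [Option.getD_some]
    intro hcz
    obtain ⟨h0, hall⟩ := hiff.mp hcz
    induction i using Fin.cases with
    | zero => exact h h0
    | succ j => exact h (hall _ (List.mem_ofFn.mpr ⟨j, rfl⟩))

/-- Upper-triangularity over `S⁰`: entries strictly below the diagonal are the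
adjoined zero; entries on and above the diagonal lie in `S`. -/
def IsUT {S : Type*} {n : ℕ} (A : MatSR (Adj0 S) n) : Prop :=
  (∀ i j : Fin n, (j : ℕ) < (i : ℕ) → A i j = Adj0.zero) ∧
  (∀ i j : Fin n, (i : ℕ) ≤ (j : ℕ) → ∃ s : S, A i j = Adj0.elem s)

lemma IsUT.mul {S : Type*} [Add S] [Mul S] {n : ℕ} {A B : MatSR (Adj0 S) n}
    (hA : IsUT A) (hB : IsUT B) : IsUT (matMul A B) := by
  constructor
  · intro i j hji
    apply finSum_adj0_eq_zero _ i
    intro k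
    rcases le_or_gt (i : ℕ) (k : ℕ) with h | h
    · rw [hB.1 k j (lt_of_lt_of_le hji h), Adj0.mul_zero]
    · rw [hA.1 i k h, Adj0.zero_mul]
  · intro i j hij
    have hne : matMul A B i j ≠ Adj0.zero := by
      apply finSum_adj0_ne_zero _ i
      obtain ⟨s, hs⟩ := hA.2 i i le_rfl
      obtain ⟨t, ht⟩ := hB.2 i j hij
      rw [hs, ht, Adj0.elem_mul_elem]
      simp
    cases hc : matMul A B i j with
    | zero => exact absurd hc hne
    | elem s => exact ⟨s, rfl⟩

/-- The multiplicative semigroup `UT_n(S)` of upper triangular matrices over `S⁰`. -/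
def UTMat (S : Type u) (n : ℕ) : Type u := {A : MatSR (Adj0 S) n // IsUT A}

instance {S : Type*} [Add S] [Mul S] {n : ℕ} : Mul (UTMat S n) :=
  ⟨fun A B => ⟨matMul A.1 B.1, A.2.mul B.2⟩⟩

/-! ### `S^{01}`: adjoining a zero and an identity, and unitriangular matrices. -/

/-- `S` with a zero and a multiplicative identity adjoined (`S^{01}` in the paper).
The sum of `one` and an `elem` is left undefined in the paper; it is given an
arbitrary value here, and never arises in products of unitriangular matrices. -/
inductive Adj01 (S : Type u) : Type u
  | zero : Adj01 S
  | one : Adj01 S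
  | elem : S → Adj01 S

namespace Adj01

def add' {S : Type*} [Add S] : Adj01 S → Adj01 S → Adj01 S
  | .zero, b => b
  | a, .zero => a
  | .one, .one => .one
  | .one, .elem b => .elem b
  | .elem a, .one => .elem a
  | .elem a, .elem b => .elem (a + b)

def mul' {S : Type*} [Mul S] : Adj01 S → Adj01 S → Adj01 S
  | .zero, _ => .zero
  | _, .zero => .zero
  | .one, b => b
  | a, .one => a
  | .elem a, .elem b => .elem (a * b)

instance {S : Type*} [Add S] : Add (Adj01 S) := ⟨add'⟩
instance {S : Type*} [Mul S] : Mul (Adj01 S) := ⟨mul'⟩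

@[simp] lemma zero_add {S : Type*} [Add S] (b : Adj01 S) : (zero : Adj01 S) + b = b := by
  cases b <;> rfl
@[simp] lemma add_zero {S : Type*} [Add S] (a : Adj01 S) : a + (zero : Adj01 S) = a := by
  cases a <;> rfl
@[simp] lemma one_add_one {S : Type*} [Add S] : (one : Adj01 S) + one = one := rfl
@[simp] lemma elem_add_elem {S : Type*} [Add S] (a b : S) :
    (elem a : Adj01 S) + elem b = elem (a + b) := rfl
@[simp] lemma one_add_elem {S : Type*} [Add S] (b : S) :
    (one : Adj01 S) + elem b = elem b := rfl
@[simp] lemma elem_add_one {S : Type*} [Add S] (a : S) :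
    (elem a : Adj01 S) + one = elem a := rfl
@[simp] lemma zero_mul {S : Type*} [Mul S] (b : Adj01 S) : (zero : Adj01 S) * b = zero := by
  cases b <;> rfl
@[simp] lemma mul_zero {S : Type*} [Mul S] (a : Adj01 S) : a * (zero : Adj01 S) = zero := by
  cases a <;> rfl
@[simp] lemma one_mul {S : Type*} [Mul S] (b : Adj01 S) : (one : Adj01 S) * b = b := by
  cases b <;> rfl
@[simp] lemma mul_one {S : Type*} [Mul S] (a : Adj01 S) : a * (one : Adj01 S) = a := by
  cases a <;> rfl
@[simp] lemma elem_mul_elem {S : Type*} [Mul S] (a b : S) :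
    (elem a : Adj01 S) * elem b = elem (a * b) := rfl

lemma mul_ne_one {S : Type*} [Mul S] {a b : Adj01 S} (ha : a ≠ one) (hb : b ≠ one) :
    a * b ≠ one := by
  cases a <;> cases b <;> simp_all

lemma add_ne_one {S : Type*} [Add S] {a b : Adj01 S} (ha : a ≠ one) (hb : b ≠ one) :
    a + b ≠ one := by
  cases a <;> cases b <;> simp_all

lemma add_01 {S : Type*} [Add S] {a b : Adj01 S} (ha : a = zero ∨ a = one)
    (hb : b = zero ∨ b = one) :
    (a + b = zero ∨ a + b = one) ∧ (a + b = one ↔ a = one ∨ b = one) := by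
  rcases ha with rfl | rfl <;> rcases hb with rfl | rfl <;> simp

end Adj01

lemma foldl_optStep_adj01 {S : Type*} [Add S] (l : List (Adj01 S)) (a : Adj01 S)
    (ha : a = Adj01.zero ∨ a = Adj01.one) (hl : ∀ x ∈ l, x = Adj01.zero ∨ x = Adj01.one) :
    ∃ c : Adj01 S, l.foldl (optStep (· + ·)) (some a) = some c ∧
      (c = Adj01.zero ∨ c = Adj01.one) ∧
      (c = Adj01.one ↔ a = Adj01.one ∨ ∃ x ∈ l, x = Adj01.one) := by
  induction l generalizing a with
  | nil => exact ⟨a, rfl, ha, by simp⟩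
  | cons x l ih =>
    have hx := hl x (by simp)
    have key := Adj01.add_01 ha hx
    obtain ⟨c, hc, hc01, hiff⟩ := ih (a + x) key.1 (fun y hy => hl y (by simp [hy]))
    refine ⟨c, by simpa [optStep] using hc, hc01, ?_⟩
    rw [hiff, key.2]
    simp only [List.mem_cons, exists_eq_or_imp]
    tauto

lemma foldl_optStep_adj01_ne_one {S : Type*} [Add S] (l : List (Adj01 S)) (a : Adj01 S)
    (ha : a ≠ Adj01.one) (hl : ∀ x ∈ l, x ≠ Adj01.one) :
    ∃ c : Adj01 S, l.foldl (optStep (· + ·)) (some a) = some c ∧ c ≠ Adj01.one := by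
  induction l generalizing a with
  | nil => exact ⟨a, rfl, ha⟩
  | cons x l ih =>
    have hax : a + x ≠ Adj01.one := Adj01.add_ne_one ha (hl x (by simp))
    obtain ⟨c, hc, hcne⟩ := ih (a + x) hax (fun y hy => hl y (by simp [hy]))
    exact ⟨c, by simpa [optStep] using hc, hcne⟩

lemma finSum_adj01_eq_one {S : Type*} [Add S] {n : ℕ} (f : Fin n → Adj01 S) (i : Fin n)
    (d : Adj01 S) (h01 : ∀ k, f k = Adj01.zero ∨ f k = Adj01.one) (hi : f i = Adj01.one) :
    (finSum f).getD d = Adj01.one := by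
  cases n with
  | zero => exact i.elim0
  | succ m =>
    rw [finSum, List.ofFn_succ, List.foldl_cons]
    obtain ⟨c, hc, _, hiff⟩ := foldl_optStep_adj01 (List.ofFn fun i : Fin m => f i.succ) (f 0)
      (h01 0) (by
        intro x hx
        rw [List.mem_ofFn] at hx
        obtain ⟨j, rfl⟩ := hx
        exact h01 _)
    rw [show optStep (· + ·) none (f 0) = some (f 0) from rfl, hc]
    simp only [Option.getD_some]
    apply hiff.mpr
    induction i using Fin.cases with
    | zero => exact Or.inl hi
    | succ j => exact Or.inr ⟨f j.succ, List.mem_ofFn.mpr ⟨j, rfl⟩, hi⟩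

lemma finSum_adj01_eq_zero {S : Type*} [Add S] {n : ℕ} (f : Fin n → Adj01 S) (i : Fin n)
    (d : Adj01 S) (h : ∀ k, f k = Adj01.zero) : (finSum f).getD d = Adj01.zero := by
  cases n with
  | zero => exact i.elim0
  | succ m =>
    rw [finSum, List.ofFn_succ, List.foldl_cons]
    obtain ⟨c, hc, hc01, hiff⟩ := foldl_optStep_adj01 (List.ofFn fun i : Fin m => f i.succ)
      (f 0) (Or.inl (h 0)) (by
        intro x hx
        rw [List.mem_ofFn] at hx
        obtain ⟨j, rfl⟩ := hx
        exact Or.inl (h _))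
    rw [show optStep (· + ·) none (f 0) = some (f 0) from rfl, hc]
    simp only [Option.getD_some]
    rcases hc01 with h' | h'
    · exact h'
    · exfalso
      rcases hiff.mp h' with h'' | ⟨x, hx, hx1⟩
      · rw [h 0] at h''; exact nomatch h''
      · rw [List.mem_ofFn] at hx
        obtain ⟨j, rfl⟩ := hx
        rw [h _] at hx1; exact nomatch hx1

lemma finSum_adj01_ne_one {S : Type*} [Add S] {n : ℕ} (f : Fin n → Adj01 S) (i : Fin n)
    (d : Adj01 S) (h : ∀ k, f k ≠ Adj01.one) : (finSum f).getD d ≠ Adj01.one := by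
  cases n with
  | zero => exact i.elim0
  | succ m =>
    rw [finSum, List.ofFn_succ, List.foldl_cons]
    obtain ⟨c, hc, hcne⟩ := foldl_optStep_adj01_ne_one (List.ofFn fun i : Fin m => f i.succ)
      (f 0) (h 0) (by
        intro x hx
        rw [List.mem_ofFn] at hx
        obtain ⟨j, rfl⟩ := hx
        exact h _)
    rw [show optStep (· + ·) none (f 0) = some (f 0) from rfl, hc]
    simpa using hcne

/-- Unitriangularity over `S^{01}`: the adjoined zero strictly below the diagonal, the
adjoined identity on the diagonal, and entries of `S⁰` (i.e. anything except the
adjoined identity) strictly above the diagonal. -/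
def IsU {S : Type*} {n : ℕ} (A : MatSR (Adj01 S) n) : Prop :=
  (∀ i j : Fin n, (j : ℕ) < (i : ℕ) → A i j = Adj01.zero) ∧
  (∀ i : Fin n, A i i = Adj01.one) ∧
  (∀ i j : Fin n, (i : ℕ) < (j : ℕ) → A i j ≠ Adj01.one)

lemma IsU.mul {S : Type*} [Add S] [Mul S] {n : ℕ} {A B : MatSR (Adj01 S) n}
    (hA : IsU A) (hB : IsU B) : IsU (matMul A B) := by
  refine ⟨?_, ?_, ?_⟩
  · intro i j hji
    apply finSum_adj01_eq_zero _ i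
    intro k
    rcases le_or_gt (i : ℕ) (k : ℕ) with h | h
    · rw [hB.1 k j (lt_of_lt_of_le hji h), Adj01.mul_zero]
    · rw [hA.1 i k h, Adj01.zero_mul]
  · intro i
    apply finSum_adj01_eq_one _ i
    · intro k
      rcases lt_trichotomy (k : ℕ) (i : ℕ) with h | h | h
      · rw [hA.1 i k h, Adj01.zero_mul]; exact Or.inl rfl
      · have : k = i := Fin.ext h
        subst this
        rw [hA.2.1 k, hB.2.1 k, Adj01.one_mul]; exact Or.inr rfl
      · rw [hB.1 k i h, Adj01.mul_zero]; exact Or.inl rfl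
    · rw [hA.2.1 i, hB.2.1 i, Adj01.one_mul]
  · intro i j hij
    apply finSum_adj01_ne_one _ i
    intro k
    rcases lt_trichotomy (k : ℕ) (i : ℕ) with h | h | h
    · rw [hA.1 i k h, Adj01.zero_mul]; exact fun h => nomatch h
    · have : k = i := Fin.ext h
      subst this
      rw [hA.2.1 k, Adj01.one_mul]
      exact hB.2.2 k j (by omega)
    · rcases lt_trichotomy (k : ℕ) (j : ℕ) with h' | h' | h'
      · exact Adj01.mul_ne_one (hA.2.2 i k h) (hB.2.2 k j h')
      · have : k = j := Fin.ext h'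
        subst this
        rw [hB.2.1 k, Adj01.mul_one]
        exact hA.2.2 i k h
      · rw [hB.1 k j h', Adj01.mul_zero]; exact fun h => nomatch h

/-- The multiplicative monoid `U_n(S)` of unitriangular matrices over `S^{01}`. -/
def UMat (S : Type u) (n : ℕ) : Type u := {A : MatSR (Adj01 S) n // IsU A}

instance {S : Type*} [Add S] [Mul S] {n : ℕ} : Mul (UMat S n) :=
  ⟨fun A B => ⟨matMul A.1 B.1, A.2.mul B.2⟩⟩

/-! ### Monogenic subsemirings. -/

/-- The carrier of the monogenic subsemiring `⟨a⟩` generated by `a` is the set of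
positive powers of `a`; in a bipotent semiring it is closed under addition. -/
instance genAdd {S : Type*} [BipotentSemiring S] (a : S) : Add ↥(Set.range (mpow a)) :=
  ⟨fun p q => ⟨p.1 + q.1, by
    rcases BipotentSemiring.bipotent p.1 q.1 with h | h <;> rw [h]
    exacts [p.2, q.2]⟩⟩

instance genMul {S : Type*} [BipotentSemiring S] (a : S) : Mul ↥(Set.range (mpow a)) :=
  ⟨fun p q => ⟨p.1 * q.1, by
    obtain ⟨m, hm⟩ := p.2
    obtain ⟨n, hn⟩ := q.2
    exact ⟨m + n + 1, by rw [← hm, ← hn, mpow_mul_mpow]⟩⟩⟩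

/-! ### Concrete bipotent semirings. -/

/-- The tropical semiring `ℕ_max` of positive natural numbers: addition is `max`,
multiplication is ordinary addition. -/
def NMax : Type := {n : ℕ // 0 < n}

instance : Add NMax := ⟨fun a b => ⟨max a.1 b.1, by have := a.2; have := b.2; omega⟩⟩
instance : Mul NMax := ⟨fun a b => ⟨a.1 + b.1, by have := a.2; have := b.2; omega⟩⟩

/-- The tropical semiring `(-ℕ)_max` of negative integers: addition is `max`,
multiplication is ordinary addition. -/
def NegNMax : Type := {z : ℤ // z < 0}

instance : Add NegNMax := ⟨fun a b => ⟨max a.1 b.1, by have := a.2; have := b.2; omega⟩⟩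
instance : Mul NegNMax := ⟨fun a b => ⟨a.1 + b.1, by have := a.2; have := b.2; omega⟩⟩

/-- The truncated tropical semiring `[k]_max` on `{1,…,k}`: addition is `max`,
multiplication is `a·b = min (a+b) k`. -/
def KMax (k : ℕ) : Type := {n : ℕ // 0 < n ∧ n ≤ k}

instance {k : ℕ} : Add (KMax k) :=
  ⟨fun a b => ⟨max a.1 b.1, by have := a.2; have := b.2; omega⟩⟩
instance {k : ℕ} : Mul (KMax k) :=
  ⟨fun a b => ⟨min (a.1 + b.1) k, by have := a.2; have := b.2; omega⟩⟩

/-- The truncated tropical semiring `[-k]_max` on `{-k,…,-1}`: addition is `max`,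
multiplication is `a·b = max (a+b) (-k)`. -/
def NegKMax (k : ℕ) : Type := {z : ℤ // -(k : ℤ) ≤ z ∧ z ≤ -1}

instance {k : ℕ} : Add (NegKMax k) :=
  ⟨fun a b => ⟨max a.1 b.1, by have := a.2; have := b.2; omega⟩⟩
instance {k : ℕ} : Mul (NegKMax k) :=
  ⟨fun a b => ⟨max (a.1 + b.1) (-(k : ℤ)), by have := a.2; have := b.2; omega⟩⟩

/-- The two-element boolean semifield `𝔹`: `{0,1}` with `0 < 1`, addition `max` (= "or")
and the usual multiplication (= "and"). -/
def BoolSR : Type := Bool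

instance : Add BoolSR := ⟨fun a b => (Bool.or a b : Bool)⟩
instance : Mul BoolSR := ⟨fun a b => (Bool.and a b : Bool)⟩

/-- A chain semiring: a linearly ordered set with addition `max` and multiplication `min`. -/
def ChainSR (L : Type u) [LinearOrder L] : Type u := L

instance {L : Type u} [LinearOrder L] : Add (ChainSR L) := ⟨fun a b => (max a b : L)⟩
instance {L : Type u} [LinearOrder L] : Mul (ChainSR L) := ⟨fun a b => (min a b : L)⟩

/-- The three-element commutative bipotent semiring of Proposition 1: order `A < B < C`
(addition is `max`), every element multiplicatively idempotent, and all products of two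
distinct elements equal to `B`. -/
inductive Three : Type
  | A : Three
  | B : Three
  | C : Three
deriving DecidableEq

instance : Fintype Three :=
  ⟨⟨↑[Three.A, Three.B, Three.C], by decide⟩, fun x => by cases x <;> decide⟩

def Three.add' : Three → Three → Three
  | .A, y => y
  | x, .A => x
  | .B, y => y
  | x, .B => x
  | .C, .C => .C

def Three.mul' : Three → Three → Three
  | .A, .A => .A
  | .B, .B => .B
  | .C, .C => .C
  | _, _ => .B

instance : Add Three := ⟨Three.add'⟩
instance : Mul Three := ⟨Three.mul'⟩

instance : CommBipotentSemiring Three where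
  nonempty' := ⟨Three.A⟩
  add_assoc' := by decide
  add_comm' := by decide
  mul_assoc' := by decide
  left_distrib' := by decide
  right_distrib' := by decide
  bipotent := by decide
  mul_comm' := by decide

/-- A bundled (possibly zero-less and identity-less) semiring, used to quantify over
semirings inside hypotheses. -/
structure BundledSemiring : Type 1 where
  carrier : Type
  add : carrier → carrier → carrier
  mul : carrier → carrier → carrier
  nonempty' : Nonempty carrier
  add_assoc' : ∀ a b c, add (add a b) c = add a (add b c)
  add_comm' : ∀ a b, add a b = add b a
  mul_assoc' : ∀ a b c, mul (mul a b) c = mul a (mul b c)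
  left_distrib' : ∀ a b c, mul a (add b c) = add (mul a b) (mul a c)
  right_distrib' : ∀ a b c, mul (add a b) c = add (mul a c) (mul b c)

/-! ### Semifields. -/

/-- `z` is a zero element: additively neutral and multiplicatively absorbing. -/
def IsZeroElem {S : Type*} [Add S] [Mul S] (z : S) : Prop :=
  ∀ x : S, z + x = x ∧ x + z = x ∧ z * x = z ∧ x * z = z

/-- `S` is a semifield: a commutative semiring, possibly without zero, whose set of
non-zero elements forms a group under multiplication (with identity `e`). -/
def IsSemifield (S : Type*) [Add S] [Mul S] : Prop :=
  ∃ e : S, ¬ IsZeroElem e ∧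
    (∀ x : S, ¬ IsZeroElem x → e * x = x ∧ x * e = x) ∧
    (∀ x y : S, ¬ IsZeroElem x → ¬ IsZeroElem y → ¬ IsZeroElem (x * y)) ∧
    (∀ x : S, ¬ IsZeroElem x → ∃ y : S, ¬ IsZeroElem y ∧ x * y = e ∧ y * x = e)

/-! ### Truncated tropical semirings. -/

/-- The underlying set `[x,y] ∪ {0}` of the truncated tropical semiring `𝕋_{[x,y]}`
(without the zero element `-∞`), for `0 ≤ x`.  Addition is `max`; multiplication is
`y`-truncated addition `a ⊗ b = min (a+b) y`, with the element `0` acting as the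
multiplicative identity. -/
def TTb (x y : ℝ) (_hx : 0 ≤ x) : Type := {r : ℝ // r = 0 ∨ (x ≤ r ∧ r ≤ y)}

namespace TTb

protected def add {x y : ℝ} {hx : 0 ≤ x} (a b : TTb x y hx) : TTb x y hx :=
  ⟨max a.1 b.1, by rcases max_choice a.1 b.1 with h | h <;> rw [h]
                   exacts [a.2, b.2]⟩

protected noncomputable def mul {x y : ℝ} {hx : 0 ≤ x} (a b : TTb x y hx) : TTb x y hx :=
  if ha : a.1 = 0 then b else if hb : b.1 = 0 then a else
    ⟨min (a.1 + b.1) y, by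
      rcases a.2 with h | h
      · exact absurd h ha
      rcases b.2 with h' | h'
      · exact absurd h' hb
      right
      exact ⟨le_min (by linarith [h.1, h'.1]) (by linarith [h.1, h.2]), min_le_right _ _⟩⟩

instance {x y : ℝ} {hx : 0 ≤ x} : Add (TTb x y hx) := ⟨TTb.add⟩
noncomputable instance {x y : ℝ} {hx : 0 ≤ x} : Mul (TTb x y hx) := ⟨TTb.mul⟩

end TTb

/-- The truncated tropical semiring `𝕋_{[x,y]}` (for `0 ≤ x < y`): the real interval
`[x,y]` together with a multiplicative identity `0` and a zero `-∞`, with addition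
`max` and multiplication the `y`-truncated addition `a ⊗ b = min (a+b) y`. -/
abbrev TT (x y : ℝ) (hx : 0 ≤ x) : Type := Adj0 (TTb x y hx)

/-- The multiplicative identity `0` of `𝕋_{[x,y]}`. -/
noncomputable def ttId (x y : ℝ) (hx : 0 ≤ x) : TT x y hx := Adj0.elem ⟨0, Or.inl rfl⟩

lemma ttId_mul {x y : ℝ} {hx : 0 ≤ x} (b : TT x y hx) : ttId x y hx * b = b := by
  cases b with
  | zero => rfl
  | elem e =>
    show Adj0.elem (TTb.mul ⟨0, Or.inl rfl⟩ e) = Adj0.elem e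
    first
    | (unfold TTb.mul; rw [dif_pos rfl])
    | exact congrArg Adj0.elem (dif_pos rfl)
    | simp [TTb.mul]

/-- The subsemigroup `S` of `M_2(𝕋_{[1,z]})` of matrices of the form `[[0,a],[-∞,b]]`. -/
noncomputable def UpperS (z : ℝ) (hz : (0:ℝ) ≤ 1) : Type :=
  {A : MatSR (TT 1 z hz) 2 // A 0 0 = ttId 1 z hz ∧ A 1 0 = Adj0.zero}

/-- The subsemigroup `S'` of `M_2(𝕋_{[1,z]})` of matrices of the form `[[0,-∞],[a,b]]`. -/
noncomputable def LowerS (z : ℝ) (hz : (0:ℝ) ≤ 1) : Type :=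
  {A : MatSR (TT 1 z hz) 2 // A 0 0 = ttId 1 z hz ∧ A 0 1 = Adj0.zero}

noncomputable instance {z : ℝ} {hz : (0:ℝ) ≤ 1} : Mul (UpperS z hz) :=
  ⟨fun A B => ⟨A.1 * B.1, by
    obtain ⟨hA1, hA2⟩ := A.2
    obtain ⟨hB1, hB2⟩ := B.2
    constructor
    · show A.1 0 0 * B.1 0 0 + A.1 0 1 * B.1 1 0 = ttId 1 z hz
      rw [hA1, hB1, hB2, ttId_mul, Adj0.mul_zero, Adj0.add_zero]
    · show A.1 1 0 * B.1 0 0 + A.1 1 1 * B.1 1 0 = Adj0.zero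
      rw [hA2, hB2, Adj0.zero_mul, Adj0.mul_zero, Adj0.add_zero]⟩⟩

noncomputable instance {z : ℝ} {hz : (0:ℝ) ≤ 1} : Mul (LowerS z hz) :=
  ⟨fun A B => ⟨A.1 * B.1, by
    obtain ⟨hA1, hA2⟩ := A.2
    obtain ⟨hB1, hB2⟩ := B.2
    constructor
    · show A.1 0 0 * B.1 0 0 + A.1 0 1 * B.1 1 0 = ttId 1 z hz
      rw [hA1, hB1, hA2, ttId_mul, Adj0.zero_mul, Adj0.add_zero]
    · show A.1 0 0 * B.1 0 1 + A.1 0 1 * B.1 1 1 = Adj0.zero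
      rw [hA1, hB2, hA2, ttId_mul, Adj0.zero_mul, Adj0.add_zero]⟩⟩

/-! ### Auxiliary development for stmt_9 -/

section Stmt9Aux

variable {S : Type u} [BipotentSemiring S]

lemma bs_add_assoc (x y z : S) : x + y + z = x + (y + z) := PlainSemiring.add_assoc' x y z
lemma bs_add_comm (x y : S) : x + y = y + x := PlainSemiring.add_comm' x y
lemma bs_mul_assoc (x y z : S) : x * y * z = x * (y * z) := PlainSemiring.mul_assoc' x y z
lemma bs_add_idem (x : S) : x + x = x := by
  rcases BipotentSemiring.bipotent x x with h | h <;> exact h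

lemma mpow_dichotomy (a : S) :
    (∀ m n : ℕ, m ≤ n → mpow a m + mpow a n = mpow a n) ∨
    (∀ m n : ℕ, m ≤ n → mpow a m + mpow a n = mpow a m) := by
  rcases BipotentSemiring.bipotent (mpow a 0) (mpow a 1) with h | h
  · -- decreasing
    right
    have hstep : ∀ n : ℕ, mpow a n + mpow a (n + 1) = mpow a n := by
      intro n
      induction n with
      | zero => exact h
      | succ n ih =>
        show mpow a n * a + mpow a (n + 1) * a = mpow a n * a
        rw [← PlainSemiring.right_distrib', ih]
    have key : ∀ m d : ℕ, mpow a m + mpow a (m + d) = mpow a m := by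
      intro m d
      induction d with
      | zero => exact bs_add_idem _
      | succ d ih =>
        show mpow a m + mpow a (m + d + 1) = mpow a m
        have h1 : mpow a m + mpow a (m + d + 1) =
            (mpow a m + mpow a (m + d)) + mpow a (m + d + 1) := by rw [ih]
        rw [h1, bs_add_assoc, hstep (m + d), ih]
    intro m n hmn
    obtain ⟨d, rfl⟩ := Nat.exists_eq_add_of_le hmn
    exact key m d
  · -- increasing
    left
    have hstep : ∀ n : ℕ, mpow a n + mpow a (n + 1) = mpow a (n + 1) := by
      intro n
      induction n with
      | zero => exact h
      | succ n ih =>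
        show mpow a n * a + mpow a (n + 1) * a = mpow a (n + 1) * a
        rw [← PlainSemiring.right_distrib', ih]
    have key : ∀ m d : ℕ, mpow a m + mpow a (m + d) = mpow a (m + d) := by
      intro m d
      induction d with
      | zero => exact bs_add_idem _
      | succ d ih =>
        show mpow a m + mpow a (m + d + 1) = mpow a (m + d + 1)
        have h1 : mpow a m + mpow a (m + d + 1) =
            mpow a m + (mpow a (m + d) + mpow a (m + d + 1)) := by rw [hstep (m + d)]
        rw [h1, ← bs_add_assoc, ih, hstep (m + d)]
    intro m n hmn
    obtain ⟨d, rfl⟩ := Nat.exists_eq_add_of_le hmn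
    exact key m d

lemma mpow_collapse (a : S) {x y : ℕ} (hxy : x < y) (heq : mpow a x = mpow a y) :
    ∀ n : ℕ, ∃ j : ℕ, j < y ∧ mpow a n = mpow a j := by
  intro n
  induction n using Nat.strong_induction_on with
  | _ n ih =>
    rcases lt_or_ge n y with hlt | hge
    · exact ⟨n, hlt, rfl⟩
    · obtain ⟨c, rfl⟩ := Nat.exists_eq_add_of_le hge
      rcases Nat.eq_zero_or_pos c with rfl | hc
      · exact ⟨x, hxy, heq.symm⟩
      · have h1 : mpow a (y + c) = mpow a (x + c) := by
          have e1 : mpow a y * mpow a (c - 1) = mpow a (y + c) := by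
            rw [mpow_mul_mpow]; congr 1; omega
          have e2 : mpow a x * mpow a (c - 1) = mpow a (x + c) := by
            rw [mpow_mul_mpow]; congr 1; omega
          rw [← e1, ← e2, heq]
        obtain ⟨j, hj, hj2⟩ := ih (x + c) (by omega)
        exact ⟨j, hj, h1.trans hj2⟩

lemma mpow_inj_of_card (a : S) (N : ℕ)
    (ha : (Set.range (mpow a)).Infinite ∨ N < (Set.range (mpow a)).ncard) :
    ∀ x y : ℕ, x ≤ N → y ≤ N → mpow a x = mpow a y → x = y := by
  have aux : ∀ x y : ℕ, x < y → y ≤ N → mpow a x ≠ mpow a y := by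
    intro x y hxy hyN heq
    have hsub : Set.range (mpow a) ⊆ mpow a '' (Set.Iio y) := by
      rintro - ⟨n, rfl⟩
      obtain ⟨j, hj, hj2⟩ := mpow_collapse a hxy heq n
      exact ⟨j, hj, hj2.symm⟩
    have hfin : (mpow a '' (Set.Iio y)).Finite := (Set.finite_Iio y).image _
    rcases ha with hinf | hcard
    · exact hinf (hfin.subset hsub)
    · have h1 : (Set.range (mpow a)).ncard ≤ (mpow a '' (Set.Iio y)).ncard :=
        Set.ncard_le_ncard hsub hfin
      have h2 : (mpow a '' (Set.Iio y)).ncard ≤ (Set.Iio y).ncard :=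
        Set.ncard_image_le (Set.finite_Iio y)
      have h3 : (Set.Iio y : Set ℕ).ncard = y := by
        rw [← Finset.coe_range, Set.ncard_coe_finset, Finset.card_range]
      omega
  intro x y hx hy heq
  rcases lt_trichotomy x y with h | h | h
  · exact absurd heq (aux x y h hy)
  · exact h
  · exact absurd heq.symm (aux y x h hx)

lemma exists_cmb (a : S) : ∃ cmb : ℕ → ℕ → ℕ,
    ((∀ x y, cmb x y = max x y) ∨ (∀ x y, cmb x y = min x y)) ∧
    (∀ x y, mpow a x + mpow a y = mpow a (cmb x y)) := by
  rcases mpow_dichotomy a with h | h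
  · refine ⟨max, Or.inl fun _ _ => rfl, fun x y => ?_⟩
    rcases le_total x y with hxy | hxy
    · rw [max_eq_right hxy]; exact h x y hxy
    · rw [max_eq_left hxy, bs_add_comm]; exact h y x hxy
  · refine ⟨min, Or.inr fun _ _ => rfl, fun x y => ?_⟩
    rcases le_total x y with hxy | hxy
    · rw [min_eq_left hxy]; exact h x y hxy
    · rw [min_eq_right hxy, bs_add_comm]; exact h y x hxy

end Stmt9Aux


section Stmt9Fold

variable {S : Type u} [BipotentSemiring S]

/-- Generic transfer of `foldl (optStep op)` along an operation-preserving map. -/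
lemma foldl_optStep_map {T U : Type*} (op : T → T → T) (op' : U → U → U) (f : T → U)
    (hf : ∀ x y, f (op x y) = op' (f x) (f y)) :
    ∀ (l : List T) (acc : Option T),
      (l.map f).foldl (optStep op') (acc.map f) = (l.foldl (optStep op) acc).map f := by
  intro l
  induction l with
  | nil => intro acc; rfl
  | cons x l ih =>
    intro acc
    have h1 : optStep op' (acc.map f) (f x) = (some (acc.elim x (fun b => op b x))).map f := by
      cases acc <;> simp [optStep, hf]
    rw [List.map_cons, List.foldl_cons, h1, List.foldl_cons]
    exact ih (some (acc.elim x (fun b => op b x)))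

lemma finProd_map {T U : Type*} [Mul T] [Mul U] (f : T → U)
    (hf : ∀ x y : T, f (x * y) = f x * f y) {k : ℕ} (s : Fin k → T) :
    finProd (fun i => f (s i)) = (finProd s).map f := by
  show (List.ofFn fun i => f (s i)).foldl (optStep (· * ·)) none = _
  have h1 : (List.ofFn fun i => f (s i)) = (List.ofFn s).map f := by
    rw [List.map_ofFn]; rfl
  rw [h1]
  exact foldl_optStep_map _ _ f hf (List.ofFn s) none

lemma finProd_list {T : Type*} [Mul T] {k : ℕ} (s : Fin k → T) (g : Fin k → ℕ)
    (A : ℕ → T) (hs : ∀ i, s i = A (g i)) :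
    finProd s = ((List.ofFn g).map A).foldl (optStep (· * ·)) none := by
  show (List.ofFn s).foldl (optStep (· * ·)) none = _
  congr 1
  rw [List.map_ofFn]
  congr 1
  funext i
  exact hs i

instance adj0Zero : Zero (Adj0 S) := ⟨Adj0.zero⟩

instance adj0ACM : AddCommMonoid (Adj0 S) where
  zero := Adj0.zero
  add_assoc := by
    intro x y z
    cases x <;> cases y <;> cases z <;> simp [bs_add_assoc]
  zero_add := Adj0.zero_add
  add_zero := Adj0.add_zero
  add_comm := by intro x y; cases x <;> cases y <;> simp [bs_add_comm]
  nsmul := nsmulRec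
  nsmul_zero := fun _ => rfl
  nsmul_succ := fun _ _ => rfl

lemma adj0_zero_def : (0 : Adj0 S) = Adj0.zero := rfl

instance adj01Zero : Zero (Adj01 S) := ⟨Adj01.zero⟩

instance adj01ACM : AddCommMonoid (Adj01 S) where
  zero := Adj01.zero
  add_assoc := by
    intro x y z
    cases x <;> cases y <;> cases z <;> simp [bs_add_assoc]
  zero_add := Adj01.zero_add
  add_zero := Adj01.add_zero
  add_comm := by intro x y; cases x <;> cases y <;> simp [bs_add_comm]
  nsmul := nsmulRec
  nsmul_zero := fun _ => rfl
  nsmul_succ := fun _ _ => rfl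

lemma adj01_zero_def : (0 : Adj01 S) = Adj01.zero := rfl

lemma foldl_optStep_sum {T : Type*} [AddMonoid T] (l : List T) (x : T) :
    l.foldl (optStep (· + ·)) (some x) = some (x + l.sum) := by
  induction l generalizing x with
  | nil => simp
  | cons y l ih =>
    have h1 : optStep (· + ·) (some x) y = some (x + y) := rfl
    rw [List.foldl_cons, h1, ih, List.sum_cons, add_assoc]

lemma finSum_eq_sum {T : Type*} [AddCommMonoid T] {n : ℕ} (hn : n ≠ 0) (f : Fin n → T)
    (d : T) : (finSum f).getD d = ∑ i, f i := by
  cases n with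
  | zero => omega
  | succ m =>
    rw [finSum, List.ofFn_succ, List.foldl_cons]
    have h1 : optStep (· + ·) none (f 0) = some (f 0) := rfl
    rw [h1, foldl_optStep_sum]
    simp [List.sum_ofFn, Fin.sum_univ_succ]

/-- matMul entries as sums, over a type with an `AddCommMonoid` structure whose
addition agrees with the `Add` instance. -/
lemma matMul_entry {T : Type*} [AddCommMonoid T] [Mul T] {n : ℕ} (hn : n ≠ 0)
    (A B : MatSR T n) (i j : Fin n) : matMul A B i j = ∑ c, A i c * B c j :=
  finSum_eq_sum hn _ _

/-- Folding a replicated idempotent-added element. -/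
lemma foldl_optStep_replicate (x : S) : ∀ (m : ℕ) (acc : S), 1 ≤ m →
    (List.replicate m x).foldl (optStep (· + ·)) (some acc) = some (acc + x) := by
  intro m
  induction m with
  | zero => omega
  | succ m ih =>
    intro acc _
    rw [List.replicate_succ, List.foldl_cons]
    have h1 : optStep (· + ·) (some acc) x = some (acc + x) := rfl
    rw [h1]
    rcases Nat.eq_zero_or_pos m with rfl | hm
    · rfl
    · rw [ih (acc + x) hm, bs_add_assoc, bs_add_idem]

/-- The projection collapsing `Fin n` onto `Fin 2` (0 to 0, the rest to 1). -/
def pi2 {n : ℕ} (c : Fin n) : Fin 2 := if (c : ℕ) = 0 then 0 else 1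

lemma pi2_zero {n : ℕ} (hn : 2 ≤ n) : pi2 (⟨0, by omega⟩ : Fin n) = 0 := rfl

lemma pi2_one {n : ℕ} (hn : 2 ≤ n) : pi2 (⟨1, by omega⟩ : Fin n) = 1 := rfl

lemma finSum_pi2_collapse {n : ℕ} (hn : 2 ≤ n) (g : Fin 2 → S) (d : S) :
    (finSum (fun c : Fin n => g (pi2 c))).getD d = g 0 + g 1 := by
  obtain ⟨m, rfl⟩ : ∃ m, n = m + 2 := ⟨n - 2, by omega⟩
  rw [finSum, List.ofFn_succ, List.foldl_cons]
  have h0 : (fun c : Fin (m + 2) => g (pi2 c)) 0 = g 0 := rfl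
  have h1 : (List.ofFn fun c : Fin (m + 1) =>
      g (pi2 (Fin.succ c : Fin (m + 2)))) = List.replicate (m + 1) (g 1) := by
    have : (fun c : Fin (m + 1) => g (pi2 (Fin.succ c : Fin (m + 2)))) =
        fun _ => g 1 := by
      funext c
      have : pi2 (Fin.succ c : Fin (m + 2)) = 1 := by
        simp [pi2, Fin.val_succ]
      rw [this]
    rw [this, List.ofFn_const]
  have h2 : optStep (· + ·) none (g (pi2 (0 : Fin (m+2)))) = some (g 0) := rfl
  rw [h2, h1, foldl_optStep_replicate _ _ _ (by omega)]
  rfl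

end Stmt9Fold

section Stmt9Perm

/-- Triangular numbers: `triT m = 1 + 2 + ⋯ + m`. -/
def triT : ℕ → ℕ
  | 0 => 0
  | m + 1 => triT m + (m + 1)

lemma triT_mono : ∀ {x y : ℕ}, x ≤ y → triT x ≤ triT y := by
  intro x y h
  induction h with
  | refl => exact le_rfl
  | step h ih =>
    refine le_trans ih ?_
    simp [triT]

lemma triT_le_sq (m : ℕ) : triT m ≤ m * m := by
  induction m with
  | zero => simp [triT]
  | succ m ih => simp [triT]; nlinarith

/-- Least moved point of a non-identity permutation of `Fin k`; it moves up,
and its preimage is strictly above it. -/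
lemma perm_least_moved {k : ℕ} (σ : Equiv.Perm (Fin k)) (hσ : σ ≠ Equiv.refl _) :
    ∃ m : Fin k, (∀ j : Fin k, (j : ℕ) < (m : ℕ) → σ j = j) ∧
      (m : ℕ) < (σ m : ℕ) ∧ (m : ℕ) < ((σ.symm m : Fin k) : ℕ) ∧ σ (σ.symm m) = m := by
  have hne : ∃ i, σ i ≠ i := by
    by_contra hcon
    push_neg at hcon
    exact hσ (Equiv.ext hcon)
  classical
  set F : Finset (Fin k) := Finset.univ.filter (fun i => σ i ≠ i) with hF
  have hFne : F.Nonempty := by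
    obtain ⟨i, hi⟩ := hne
    exact ⟨i, by simp [hF, hi]⟩
  set m := F.min' hFne with hm
  have hmF : σ m ≠ m := by
    have := F.min'_mem hFne
    simp [hF] at this
    exact this
  have hfix : ∀ j : Fin k, (j : ℕ) < (m : ℕ) → σ j = j := by
    intro j hj
    by_contra hj'
    have h1 : m ≤ j := F.min'_le j (by simp [hF, hj'])
    have : (m : ℕ) ≤ (j : ℕ) := h1
    omega
  have hup : (m : ℕ) < (σ m : ℕ) := by
    rcases lt_trichotomy ((σ m : Fin k) : ℕ) ((m : Fin k) : ℕ) with h | h | h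
    · have h1 := hfix (σ m) h
      exact absurd (σ.injective h1) hmF
    · exact absurd (Fin.ext h) hmF
    · exact h
  have hsymm : σ (σ.symm m) = m := σ.apply_symm_apply m
  have hr : (m : ℕ) < ((σ.symm m : Fin k) : ℕ) := by
    rcases lt_trichotomy ((σ.symm m : Fin k) : ℕ) ((m : Fin k) : ℕ) with h | h | h
    · have h1 := hfix (σ.symm m) h
      rw [h1] at hsymm
      omega
    · have h1 : σ.symm m = m := Fin.ext h
      rw [h1] at hsymm
      exact absurd hsymm hmF
    · exact h
  exact ⟨m, hfix, hup, hr, hsymm⟩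

end Stmt9Perm


section Stmt9M

set_option linter.unusedSectionVars false

variable {S : Type u} [BipotentSemiring S]

/-- Row weights of the rank-one matrices used for `M_n(S)`. -/
def mRho (k m : ℕ) : Fin 2 → ℕ := fun c => if c = 0 then 4 * k - m else 2 * k + m

/-- Column weights of the rank-one matrices used for `M_n(S)`. -/
def mGam (k m : ℕ) : Fin 2 → ℕ := fun c => if c = 0 then m + 1 else 2 * k - (m + 1)

/-- The rank-one witness matrices in `M_n(S)`. -/
def mAmat (a : S) (k n m : ℕ) : MatSR S n :=
  fun i j => mpow a (mRho k m (pi2 i)) * mpow a (mGam k m (pi2 j))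

/-- Interaction exponent between two consecutive factors. -/
def cexp (cmb : ℕ → ℕ → ℕ) (k x y : ℕ) : ℕ :=
  cmb (mGam k x 0 + mRho k y 0 + 1) (mGam k x 1 + mRho k y 1 + 1)

/-- Total interaction exponent along a chain. -/
def chainQ (cmb : ℕ → ℕ → ℕ) (k : ℕ) : ℕ → List ℕ → ℕ
  | _, [] => 0
  | m, y :: l => (cexp cmb k m y + 1) + chainQ cmb k y l

def lastOf : ℕ → List ℕ → ℕ
  | m, [] => m
  | _, y :: l => lastOf y l

lemma chainQ_append (cmb : ℕ → ℕ → ℕ) (k : ℕ) : ∀ (l : List ℕ) (m y : ℕ),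
    chainQ cmb k m (l ++ [y]) = chainQ cmb k m l + (cexp cmb k (lastOf m l) y + 1) := by
  intro l
  induction l with
  | nil => intro m y; simp [chainQ, lastOf]
  | cons z l ih =>
    intro m y
    show (cexp cmb k m z + 1) + chainQ cmb k z (l ++ [y]) = _
    rw [ih]
    simp [chainQ, lastOf]
    omega

lemma lastOf_append : ∀ (l : List ℕ) (m y : ℕ), lastOf m (l ++ [y]) = y := by
  intro l
  induction l with
  | nil => intro m y; rfl
  | cons z l ih => intro m y; exact ih z y

lemma lastOf_mem : ∀ (l : List ℕ) (m : ℕ), lastOf m l ∈ m :: l := by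
  intro l
  induction l with
  | nil => intro m; simp [lastOf]
  | cons z l ih =>
    intro m
    have := ih z
    show lastOf z l ∈ _
    simp at this ⊢
    tauto

lemma matMul_apply {T : Type*} [Add T] [Mul T] {n : ℕ} (A B : MatSR T n) (i j : Fin n) :
    (A * B) i j = (finSum (fun c => A i c * B c j)).getD (A i j * B i j) := rfl

/-- Master computation for products of the rank-one matrices. -/
lemma master_M (a : S) (cmb : ℕ → ℕ → ℕ)
    (hcd : (∀ x y, cmb x y = max x y) ∨ (∀ x y, cmb x y = min x y))
    (hc : ∀ x y, mpow a x + mpow a y = mpow a (cmb x y))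
    (k : ℕ) {n : ℕ} (hn : 2 ≤ n) : ∀ (l : List ℕ) (m : ℕ), ∃ P : MatSR S n,
    ((m :: l).map (mAmat a k n)).foldl (optStep (· * ·)) none = some P ∧
    ∀ i j, P i j = mpow a
        (mRho k m (pi2 i) + chainQ cmb k m l + mGam k (lastOf m l) (pi2 j) + 1) := by
  have hcomb : ∀ (C u v : ℕ), cmb (C + u) (C + v) = C + cmb u v := by
    intro C u v; rcases hcd with hd | hd <;> simp only [hd] <;> omega
  intro l
  induction l using List.reverseRecOn with
  | nil =>
    intro m
    refine ⟨mAmat a k n m, rfl, fun i j => ?_⟩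
    show mpow a _ * mpow a _ = _
    have he : mRho k m (pi2 i) + mGam k m (pi2 j) + 1 =
        mRho k m (pi2 i) + chainQ cmb k m [] + mGam k (lastOf m []) (pi2 j) + 1 := by
      simp only [chainQ, lastOf]
      omega
    rw [mpow_mul_mpow, he]
  | append_singleton l y ih =>
    intro m
    obtain ⟨P, hP, hPe⟩ := ih m
    have h1 : m :: (l ++ [y]) = (m :: l) ++ [y] := rfl
    refine ⟨P * mAmat a k n y, ?_, ?_⟩
    · rw [h1, List.map_append, List.foldl_append, hP]
      rfl
    · intro i j
      rw [matMul_apply]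
      have h2 : (fun c : Fin n => P i c * mAmat a k n y c j) =
          fun c : Fin n => mpow a
            ((mRho k m (pi2 i) + chainQ cmb k m l + mGam k y (pi2 j) + 2)
              + (mGam k (lastOf m l) (pi2 c) + mRho k y (pi2 c) + 1)) := by
        funext c
        rw [hPe i c]
        show mpow a _ * (mpow a _ * mpow a _) = _
        rw [mpow_mul_mpow, mpow_mul_mpow]
        congr 1
        omega
      rw [h2]
      refine Eq.trans (finSum_pi2_collapse hn (fun c2 : Fin 2 => mpow a
        ((mRho k m (pi2 i) + chainQ cmb k m l + mGam k y (pi2 j) + 2)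
          + (mGam k (lastOf m l) c2 + mRho k y c2 + 1))) _) ?_
      rw [hc]
      congr 1
      rw [hcomb, chainQ_append, lastOf_append]
      simp only [cexp]
      omega

lemma cexp_val0 (cmb : ℕ → ℕ → ℕ) (k x y : ℕ) :
    cexp cmb k x y = cmb ((x + 1) + (4 * k - y) + 1) ((2 * k - (x + 1)) + (2 * k + y) + 1) := by
  simp only [cexp, mGam, mRho]
  norm_num

lemma cexp_consec (cmb : ℕ → ℕ → ℕ)
    (hcd : (∀ x y, cmb x y = max x y) ∨ (∀ x y, cmb x y = min x y))
    (k x : ℕ) (hx : x + 1 ≤ 2 * k) : cexp cmb k x (x + 1) = 4 * k + 1 := by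
  rw [cexp_val0]
  rcases hcd with hd | hd <;> rw [hd] <;> omega

lemma cexp_ge_incr (cmb : ℕ → ℕ → ℕ) (hd : ∀ x y, cmb x y = max x y)
    (k x y : ℕ) (hx : x + 1 ≤ 2 * k) (hy : y ≤ 2 * k) : 4 * k + 1 ≤ cexp cmb k x y := by
  rw [cexp_val0, hd]; omega

lemma cexp_le_decr (cmb : ℕ → ℕ → ℕ) (hd : ∀ x y, cmb x y = min x y)
    (k x y : ℕ) (hx : x + 1 ≤ 2 * k) (hy : y ≤ 2 * k) : cexp cmb k x y ≤ 4 * k + 1 := by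
  rw [cexp_val0, hd]; omega

lemma cexp_eq_imp (cmb : ℕ → ℕ → ℕ)
    (hcd : (∀ x y, cmb x y = max x y) ∨ (∀ x y, cmb x y = min x y))
    (k x y : ℕ) (hx : x + 1 ≤ 2 * k) (hy : y ≤ 2 * k)
    (h : cexp cmb k x y = 4 * k + 1) : y = x + 1 := by
  rw [cexp_val0] at h
  rcases hcd with hd | hd <;> rw [hd] at h <;> omega

lemma cexp_bound (cmb : ℕ → ℕ → ℕ)
    (hcd : (∀ x y, cmb x y = max x y) ∨ (∀ x y, cmb x y = min x y))
    (k x y : ℕ) (hx : x ≤ 2 * k) (hy : y ≤ 2 * k) : cexp cmb k x y ≤ 8 * k + 2 := by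
  rw [cexp_val0]
  rcases hcd with hd | hd <;> rw [hd] <;> omega

lemma chainQ_bound (cmb : ℕ → ℕ → ℕ)
    (hcd : (∀ x y, cmb x y = max x y) ∨ (∀ x y, cmb x y = min x y)) (k : ℕ) :
    ∀ (l : List ℕ) (m : ℕ), (∀ x ∈ m :: l, x ≤ 2 * k) →
      chainQ cmb k m l ≤ l.length * (8 * k + 3) := by
  intro l
  induction l with
  | nil => intro m _; simp [chainQ]
  | cons y l ih =>
    intro m hb
    have h1 : cexp cmb k m y ≤ 8 * k + 2 :=
      cexp_bound cmb hcd k m y (hb m (by simp)) (hb y (by simp))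
    have h2 := ih y (by intro x hx; apply hb; simp at hx ⊢; tauto)
    show (cexp cmb k m y + 1) + chainQ cmb k y l ≤ _
    simp only [List.length_cons]
    have hmul : (l.length + 1) * (8 * k + 3) = l.length * (8 * k + 3) + (8 * k + 3) := by ring
    omega

lemma chainQ_ge_incr (cmb : ℕ → ℕ → ℕ) (hd : ∀ x y, cmb x y = max x y) (k : ℕ) :
    ∀ (l : List ℕ) (m : ℕ), (∀ x ∈ m :: l, x + 1 ≤ 2 * k) →
      l.length * (4 * k + 2) ≤ chainQ cmb k m l := by
  intro l
  induction l with
  | nil => intro m _; simp [chainQ]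
  | cons y l ih =>
    intro m hb
    have h1 := cexp_ge_incr cmb hd k m y (hb m (by simp)) (by have := hb y (by simp); omega)
    have h2 := ih y (by intro x hx; apply hb; simp at hx ⊢; tauto)
    show _ ≤ (cexp cmb k m y + 1) + chainQ cmb k y l
    simp only [List.length_cons]
    have hmul : (l.length + 1) * (4 * k + 2) = l.length * (4 * k + 2) + (4 * k + 2) := by ring
    omega

lemma chainQ_le_decr (cmb : ℕ → ℕ → ℕ) (hd : ∀ x y, cmb x y = min x y) (k : ℕ) :
    ∀ (l : List ℕ) (m : ℕ), (∀ x ∈ m :: l, x + 1 ≤ 2 * k) →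
      chainQ cmb k m l ≤ l.length * (4 * k + 2) := by
  intro l
  induction l with
  | nil => intro m _; simp [chainQ]
  | cons y l ih =>
    intro m hb
    have h1 := cexp_le_decr cmb hd k m y (hb m (by simp)) (by have := hb y (by simp); omega)
    have h2 := ih y (by intro x hx; apply hb; simp at hx ⊢; tauto)
    show (cexp cmb k m y + 1) + chainQ cmb k y l ≤ _
    simp only [List.length_cons]
    have hmul : (l.length + 1) * (4 * k + 2) = l.length * (4 * k + 2) + (4 * k + 2) := by ring
    omega

lemma chainQ_forces (cmb : ℕ → ℕ → ℕ)
    (hcd : (∀ x y, cmb x y = max x y) ∨ (∀ x y, cmb x y = min x y)) (k : ℕ) :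
    ∀ (l : List ℕ) (m : ℕ), (∀ x ∈ m :: l, x + 1 ≤ 2 * k) →
      chainQ cmb k m l = l.length * (4 * k + 2) →
      m :: l = List.range' m (l.length + 1) := by
  intro l
  induction l with
  | nil => intro m _ _; rfl
  | cons y l ih =>
    intro m hb hq
    have hbm : m + 1 ≤ 2 * k := hb m (by simp)
    have hby : y + 1 ≤ 2 * k := hb y (by simp)
    have hbl : ∀ x ∈ y :: l, x + 1 ≤ 2 * k := by
      intro x hx; apply hb; simp at hx ⊢; tauto
    have hq' : (cexp cmb k m y + 1) + chainQ cmb k y l = (l.length + 1) * (4 * k + 2) := by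
      simpa [chainQ, List.length_cons] using hq
    have hmul : (l.length + 1) * (4 * k + 2) = l.length * (4 * k + 2) + (4 * k + 2) := by ring
    have key : cexp cmb k m y = 4 * k + 1 ∧ chainQ cmb k y l = l.length * (4 * k + 2) := by
      rcases hcd with hd | hd
      · have h1 := cexp_ge_incr cmb hd k m y hbm (by omega)
        have h2 := chainQ_ge_incr cmb hd k l y hbl
        constructor <;> omega
      · have h1 := cexp_le_decr cmb hd k m y hbm (by omega)
        have h2 := chainQ_le_decr cmb hd k l y hbl
        constructor <;> omega
    have hy : y = m + 1 := cexp_eq_imp cmb hcd k m y hbm (by omega) key.1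
    have htail := ih y hbl key.2
    subst hy
    simp only [List.length_cons]
    rw [List.range'_succ, ← htail]

lemma lastOf_range' : ∀ (j m : ℕ), lastOf m (List.range' (m + 1) j) = m + j := by
  intro j
  induction j with
  | zero => intro m; rfl
  | succ j ih =>
    intro m
    rw [List.range'_succ]
    show lastOf (m + 1) (List.range' (m + 2) j) = _
    rw [ih (m + 1)]
    omega

lemma chainQ_range' (cmb : ℕ → ℕ → ℕ)
    (hcd : (∀ x y, cmb x y = max x y) ∨ (∀ x y, cmb x y = min x y)) (k : ℕ) :
    ∀ (j m : ℕ), m + j ≤ 2 * k → chainQ cmb k m (List.range' (m + 1) j) = j * (4 * k + 2) := by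
  intro j
  induction j with
  | zero => intro m _; simp [chainQ]
  | succ j ih =>
    intro m hm
    rw [List.range'_succ]
    show (cexp cmb k m (m + 1) + 1) + chainQ cmb k (m + 1) (List.range' (m + 2) j) = _
    rw [cexp_consec cmb hcd k m (by omega), ih (m + 1) (by omega)]
    ring

lemma ofFn_val_range (q : ℕ) : List.ofFn (fun t : Fin q => (t : ℕ)) = List.range q := by
  apply List.ext_getElem
  · simp
  · intro i h1 h2
    simp

end Stmt9M


section Stmt9MEnd

set_option linter.unusedSectionVars false

variable {S : Type u} [BipotentSemiring S]

lemma mRho_le (k m : ℕ) (c : Fin 2) (hm : m ≤ 2 * k) : mRho k m c ≤ 4 * k := by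
  fin_cases c <;> simp [mRho] <;> omega

lemma mGam_le (k m : ℕ) (c : Fin 2) (hm : m + 1 ≤ 2 * k) : mGam k m c ≤ 2 * k := by
  fin_cases c <;> simp [mGam] <;> omega

lemma mRho_eval0 (k m : ℕ) : mRho k m 0 = 4 * k - m := by simp [mRho]
lemma mRho_eval1 (k m : ℕ) : mRho k m 1 = 2 * k + m := by simp [mRho]
lemma mGam_eval0 (k m : ℕ) : mGam k m 0 = m + 1 := by simp [mGam]
lemma mGam_eval1 (k m : ℕ) : mGam k m 1 = 2 * k - (m + 1) := by simp [mGam]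

lemma ofFn_succ_val_range' (q : ℕ) :
    List.ofFn (fun i : Fin q => ((Fin.succ i : Fin (q + 1)) : ℕ)) = List.range' 1 q := by
  apply List.ext_getElem
  · simp
  · intro i h1 h2
    simp [List.getElem_range']
    omega

lemma not_SP_matSR {n : ℕ} (hn : 2 ≤ n)
    (h : ∀ k : ℕ, ∃ x : S,
      (Set.range (mpow x)).Infinite ∨ k < (Set.range (mpow x)).ncard) :
    ¬ StronglyPermutable (MatSR S n) := by
  rintro ⟨k, hk2, hperm⟩
  obtain ⟨a, ha⟩ := h (20 * k * k + 20 * k + 20)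
  have hinj := mpow_inj_of_card a _ ha
  obtain ⟨cmb, hcd, hc⟩ := exists_cmb a
  obtain ⟨σ, hσne, hσ⟩ := hperm (fun t : Fin k => mAmat a k n (t : ℕ))
  obtain ⟨k', rfl⟩ : ∃ k', k = k' + 1 := ⟨k - 1, by omega⟩
  have hσlist : finProd (fun i : Fin (k' + 1) =>
        mAmat a (k' + 1) n ((σ i : Fin (k' + 1)) : ℕ)) =
      ((List.ofFn (fun i : Fin (k' + 1) => ((σ i : Fin (k' + 1)) : ℕ))).map
        (mAmat a (k' + 1) n)).foldl (optStep (· * ·)) none :=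
    finProd_list _ _ _ (fun i => rfl)
  have hidlist : finProd (fun t : Fin (k' + 1) => mAmat a (k' + 1) n (t : ℕ)) =
      ((List.ofFn (fun t : Fin (k' + 1) => (t : ℕ))).map
        (mAmat a (k' + 1) n)).foldl (optStep (· * ·)) none :=
    finProd_list _ _ _ (fun i => rfl)
  rw [List.ofFn_succ] at hσlist hidlist
  have hkey := (hσlist.symm.trans hσ).trans hidlist
  obtain ⟨P1, hP1, hP1e⟩ := master_M a cmb hcd hc (k' + 1) hn
      (List.ofFn (fun i : Fin k' => ((σ i.succ : Fin (k' + 1)) : ℕ)))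
      ((σ 0 : Fin (k' + 1)) : ℕ)
  obtain ⟨P0, hP0, hP0e⟩ := master_M a cmb hcd hc (k' + 1) hn
      (List.ofFn (fun i : Fin k' => ((Fin.succ i : Fin (k' + 1)) : ℕ)))
      ((0 : Fin (k' + 1)) : ℕ)
  have hPP : P1 = P0 := by
    have := (hP1.symm.trans hkey).trans hP0
    exact Option.some_injective _ this
  -- abbreviations
  set m1 : ℕ := ((σ 0 : Fin (k' + 1)) : ℕ) with hm1
  set l1 : List ℕ := List.ofFn (fun i : Fin k' => ((σ i.succ : Fin (k' + 1)) : ℕ)) with hl1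
  set q1 : ℕ := chainQ cmb (k' + 1) m1 l1 with hq1
  set r1 : ℕ := lastOf m1 l1 with hr1
  set l0 : List ℕ := List.ofFn (fun i : Fin k' => ((Fin.succ i : Fin (k' + 1)) : ℕ)) with hl0
  have hl0r : l0 = List.range' 1 k' := ofFn_succ_val_range' k'
  have hm0 : ((0 : Fin (k' + 1)) : ℕ) = 0 := rfl
  have hq0 : chainQ cmb (k' + 1) ((0 : Fin (k' + 1)) : ℕ) l0 = k' * (4 * (k' + 1) + 2) := by
    rw [hm0, hl0r]
    exact chainQ_range' cmb hcd (k' + 1) k' 0 (by omega)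
  have hr0 : lastOf ((0 : Fin (k' + 1)) : ℕ) l0 = k' := by
    rw [hm0, hl0r]
    have := lastOf_range' k' 0
    simpa using this
  -- bounds
  have hm1le : m1 ≤ k' := by rw [hm1]; exact Fin.is_le _
  have hl1b : ∀ x ∈ m1 :: l1, x ≤ k' := by
    intro x hx
    rcases List.mem_cons.mp hx with rfl | hx
    · exact hm1le
    · rw [hl1] at hx
      obtain ⟨i, hi⟩ := List.mem_ofFn.mp hx
      rw [← hi]
      exact Fin.is_le _
  have hr1le : r1 ≤ k' := hl1b _ (by rw [hr1]; exact lastOf_mem l1 m1)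
  have hq1le : q1 ≤ k' * (8 * (k' + 1) + 3) := by
    rw [hq1]
    have := chainQ_bound cmb hcd (k' + 1) l1 m1
      (by intro x hx; have := hl1b x hx; omega)
    rw [hl1] at this ⊢
    simpa using this
  have hq0le : k' * (4 * (k' + 1) + 2) ≤ k' * (8 * (k' + 1) + 3) :=
    Nat.mul_le_mul_left _ (by omega)
  have hNle : k' * (8 * (k' + 1) + 3) + 6 * (k' + 1) + 2 ≤
      20 * (k' + 1) * (k' + 1) + 20 * (k' + 1) + 20 := by nlinarith
  -- entry equations
  set i0 : Fin n := ⟨0, by omega⟩ with hi0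
  set i1 : Fin n := ⟨1, by omega⟩ with hi1
  have hpi0 : pi2 i0 = 0 := rfl
  have hpi1 : pi2 i1 = 1 := rfl
  have hE : ∀ ci cj : Fin 2, ci = pi2 i0 ∨ ci = pi2 i1 → cj = pi2 i0 ∨ cj = pi2 i1 →
      mRho (k' + 1) m1 ci + q1 + mGam (k' + 1) r1 cj + 1 =
      mRho (k' + 1) 0 ci + k' * (4 * (k' + 1) + 2) + mGam (k' + 1) k' cj + 1 := by
    intro ci cj hci hcj
    have hii : ∀ i j : Fin n, P1 i j = P0 i j := fun i j => by rw [hPP]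
    have step : ∀ (i j : Fin n), ci = pi2 i → cj = pi2 j →
        mpow a (mRho (k' + 1) m1 ci + q1 + mGam (k' + 1) r1 cj + 1) =
        mpow a (mRho (k' + 1) 0 ci + k' * (4 * (k' + 1) + 2) + mGam (k' + 1) k' cj + 1) := by
      intro i j hci' hcj'
      have e1 := hP1e i j
      have e2 := hP0e i j
      rw [hq0, hr0, hm0] at e2
      rw [hci', hcj']
      exact (e1.symm.trans ((hii i j).trans e2))
    have hmono : mpow a (mRho (k' + 1) m1 ci + q1 + mGam (k' + 1) r1 cj + 1) =
        mpow a (mRho (k' + 1) 0 ci + k' * (4 * (k' + 1) + 2) + mGam (k' + 1) k' cj + 1) := by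
      rcases hci with rfl | rfl <;> rcases hcj with rfl | rfl
      · exact step i0 i0 rfl rfl
      · exact step i0 i1 rfl rfl
      · exact step i1 i0 rfl rfl
      · exact step i1 i1 rfl rfl
    apply hinj _ _ _ _ hmono
    · have h1 := mRho_le (k' + 1) m1 ci (by omega)
      have h2 := mGam_le (k' + 1) r1 cj (by omega)
      omega
    · have h1 := mRho_le (k' + 1) 0 ci (by omega)
      have h2 := mGam_le (k' + 1) k' cj (by omega)
      omega
  -- numeric extraction
  have E00 := hE 0 0 (Or.inl rfl) (Or.inl rfl)
  have E01 := hE 0 1 (Or.inl rfl) (Or.inr rfl)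
  have E10 := hE 1 0 (Or.inr rfl) (Or.inl rfl)
  rw [mRho_eval0, mRho_eval0, mGam_eval0, mGam_eval0] at E00
  rw [mRho_eval0, mRho_eval0, mGam_eval1, mGam_eval1] at E01
  rw [mRho_eval1, mRho_eval1, mGam_eval0, mGam_eval0] at E10
  have hm1z : m1 = 0 ∧ r1 = k' ∧ q1 = k' * (4 * (k' + 1) + 2) := by
    constructor
    · omega
    constructor <;> omega
  -- forcing
  have hforce := chainQ_forces cmb hcd (k' + 1) l1 m1
    (by intro x hx; have := hl1b x hx; omega)
    (by rw [← hq1, hm1z.2.2, hl1]; simp)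
  have hlen : l1.length = k' := by rw [hl1]; simp
  have hlistfin : List.ofFn (fun i : Fin (k' + 1) => ((σ i : Fin (k' + 1)) : ℕ)) =
      List.ofFn (fun t : Fin (k' + 1) => (t : ℕ)) := by
    rw [List.ofFn_succ]
    show m1 :: l1 = _
    rw [hforce, hm1z.1, hlen, ofFn_val_range (k' + 1), List.range_eq_range']
  have hfun := List.ofFn_inj.mp hlistfin
  apply hσne
  apply Equiv.ext
  intro t
  have := congrFun hfun t
  exact Fin.ext this

end Stmt9MEnd


section Stmt9UT

set_option linter.unusedSectionVars false

variable {S : Type u} [BipotentSemiring S]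

def utu (k m : ℕ) : ℕ := k * (m + 1) - 1
def utw (k m : ℕ) : ℕ := k * triT k - k * triT m

/-- Witness matrices in `UT_n(S)`. -/
def utA (a : S) (k n m : ℕ) : MatSR (Adj0 S) n := fun i j =>
  if (j : ℕ) < (i : ℕ) then Adj0.zero
  else if (i : ℕ) = 0 ∧ (j : ℕ) = 0 then Adj0.elem (mpow a (utu k m))
  else if (i : ℕ) = 0 ∧ (j : ℕ) = 1 then Adj0.elem (mpow a (utw k m))
  else Adj0.elem (mpow a 0)

lemma utA_isUT (a : S) (k n m : ℕ) : IsUT (utA a k n m) := by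
  constructor
  · intro i j hji
    simp only [utA]
    rw [if_pos hji]
  · intro i j hij
    simp only [utA]
    split_ifs with h1 h2 h3
    · omega
    · exact ⟨_, rfl⟩
    · exact ⟨_, rfl⟩
    · exact ⟨_, rfl⟩

def utStep (cmb : ℕ → ℕ → ℕ) (k : ℕ) : ℕ × ℕ → ℕ → ℕ × ℕ :=
  fun p y => (p.1 + utu k y + 1, cmb (p.1 + utw k y + 1) (p.2 + 1))

def utSG (cmb : ℕ → ℕ → ℕ) (k m : ℕ) (l : List ℕ) : ℕ × ℕ :=
  l.foldl (utStep cmb k) (utu k m, utw k m)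

lemma utSG_append (cmb : ℕ → ℕ → ℕ) (k m : ℕ) (l : List ℕ) (y : ℕ) :
    utSG cmb k m (l ++ [y]) = utStep cmb k (utSG cmb k m l) y := by
  simp [utSG, List.foldl_append]

lemma master_UT (a : S) (cmb : ℕ → ℕ → ℕ)
    (hc : ∀ x y, mpow a x + mpow a y = mpow a (cmb x y))
    (k : ℕ) {n : ℕ} (hn : 2 ≤ n) : ∀ (l : List ℕ) (m : ℕ), ∃ P : MatSR (Adj0 S) n,
    ((m :: l).map (utA a k n)).foldl (optStep (· * ·)) none = some P ∧
    P ⟨0, by omega⟩ ⟨0, by omega⟩ = Adj0.elem (mpow a (utSG cmb k m l).1) ∧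
    P ⟨0, by omega⟩ ⟨1, by omega⟩ = Adj0.elem (mpow a (utSG cmb k m l).2) ∧
    P ⟨1, by omega⟩ ⟨1, by omega⟩ = Adj0.elem (mpow a l.length) ∧
    P ⟨1, by omega⟩ ⟨0, by omega⟩ = Adj0.zero := by
  have hn0 : n ≠ 0 := by omega
  set i0 : Fin n := ⟨0, by omega⟩ with hi0
  set i1 : Fin n := ⟨1, by omega⟩ with hi1
  have hA00 : ∀ m, utA a k n m i0 i0 = Adj0.elem (mpow a (utu k m)) := by
    intro m; simp [utA, hi0]
  have hA01 : ∀ m, utA a k n m i0 i1 = Adj0.elem (mpow a (utw k m)) := by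
    intro m; simp [utA, hi0, hi1]
  have hA11 : ∀ m, utA a k n m i1 i1 = Adj0.elem (mpow a 0) := by
    intro m; simp [utA, hi1]
  have hAc0 : ∀ m (c : Fin n), c ≠ i0 → utA a k n m c i0 = Adj0.zero := by
    intro m c hc0
    have : (0 : ℕ) < (c : ℕ) := by
      rcases Nat.eq_zero_or_pos (c : ℕ) with h | h
      · exact absurd (Fin.ext h) hc0
      · exact h
    simp only [utA]
    rw [if_pos]
    exact this
  have hAc1 : ∀ m (c : Fin n), c ≠ i0 → c ≠ i1 → utA a k n m c i1 = Adj0.zero := by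
    intro m c hc0 hc1
    have : (1 : ℕ) < (c : ℕ) := by
      rcases Nat.lt_or_ge (c : ℕ) 2 with h | h
      · interval_cases h' : (c : ℕ)
        · exact absurd (Fin.ext h') hc0
        · exact absurd (Fin.ext h') hc1
      · omega
    simp only [utA]
    rw [if_pos]
    exact this
  intro l
  induction l using List.reverseRecOn with
  | nil =>
    intro m
    exact ⟨utA a k n m, rfl, hA00 m, hA01 m, hA11 m, hAc0 m i1 (by
      intro h; rw [hi0, hi1] at h; exact absurd (congrArg Fin.val h) (by simp))⟩
  | append_singleton l y ih =>
    intro m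
    obtain ⟨P, hP, h00, h01, h11, h10⟩ := ih m
    have hne01 : i0 ≠ i1 := by
      intro h; rw [hi0, hi1] at h; exact absurd (congrArg Fin.val h) (by simp)
    refine ⟨P * utA a k n y, ?_, ?_, ?_, ?_, ?_⟩
    · rw [show m :: (l ++ [y]) = (m :: l) ++ [y] from rfl, List.map_append,
        List.foldl_append, hP]
      rfl
    · -- entry (0,0)
      rw [matMul_apply, finSum_eq_sum hn0, Finset.sum_eq_single i0]
      · rw [h00, hA00, Adj0.elem_mul_elem, mpow_mul_mpow, utSG_append]
        rfl
      · intro c _ hc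
        rw [hAc0 y c hc, Adj0.mul_zero]
        rfl
      · intro hmem; exact absurd (Finset.mem_univ _) hmem
    · -- entry (0,1)
      rw [matMul_apply, finSum_eq_sum hn0]
      have hsub : ∑ c, P i0 c * utA a k n y c i1 =
          ∑ c ∈ ({i0, i1} : Finset (Fin n)), P i0 c * utA a k n y c i1 := by
        refine (Finset.sum_subset (Finset.subset_univ _) ?_).symm
        intro c _ hc
        simp only [Finset.mem_insert, Finset.mem_singleton] at hc
        push_neg at hc
        rw [hAc1 y c hc.1 hc.2, Adj0.mul_zero]
        rfl
      rw [hsub, Finset.sum_pair hne01, h00, h01, hA01, hA11,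
        Adj0.elem_mul_elem, Adj0.elem_mul_elem, mpow_mul_mpow, mpow_mul_mpow,
        Adj0.elem_add_elem, hc, utSG_append]
      rfl
    · -- entry (1,1)
      rw [matMul_apply, finSum_eq_sum hn0, Finset.sum_eq_single i1]
      · rw [h11, hA11, Adj0.elem_mul_elem, mpow_mul_mpow]
        congr 2
        simp
      · intro c _ hc
        rcases eq_or_ne c i0 with rfl | hc0
        · rw [h10, Adj0.zero_mul]; rfl
        · rw [hAc1 y c hc0 hc, Adj0.mul_zero]; rfl
      · intro hmem; exact absurd (Finset.mem_univ _) hmem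
    · -- entry (1,0)
      rw [matMul_apply, finSum_eq_sum hn0]
      rw [show (Adj0.zero : Adj0 S) = (0 : Adj0 S) from rfl]
      apply Finset.sum_eq_zero
      intro c _
      rcases eq_or_ne c i0 with rfl | hc0
      · rw [h10, Adj0.zero_mul]; rfl
      · rw [hAc0 y c hc0, Adj0.mul_zero]; rfl

end Stmt9UT


section Stmt9UTComb

set_option linter.unusedSectionVars false

def sumA (l : List ℕ) : ℕ := (l.map (· + 1)).sum

lemma sumA_nil : sumA [] = 0 := rfl
lemma sumA_cons (x : ℕ) (l : List ℕ) : sumA (x :: l) = (x + 1) + sumA l := by simp [sumA]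
lemma sumA_append (l1 l2 : List ℕ) : sumA (l1 ++ l2) = sumA l1 + sumA l2 := by simp [sumA]
lemma sumA_pos (x : ℕ) (l : List ℕ) : 1 ≤ sumA (x :: l) := by rw [sumA_cons]; omega

lemma sumA_range (m : ℕ) : sumA (List.range m) = triT m := by
  induction m with
  | zero => rfl
  | succ m ih =>
    rw [List.range_succ, sumA_append, ih]
    simp [sumA, triT]

lemma sumA_le (K : ℕ) : ∀ l : List ℕ, (∀ x ∈ l, x ≤ K) → sumA l ≤ l.length * (K + 1) := by
  intro l
  induction l with
  | nil => intro _; simp [sumA]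
  | cons x l ih =>
    intro hb
    rw [sumA_cons]
    have h1 := ih (fun y hy => hb y (by simp [hy]))
    have h2 := hb x (by simp)
    have h3 : (x :: l).length * (K + 1) = l.length * (K + 1) + (K + 1) := by
      simp [List.length_cons]; ring
    omega

def utSGof (cmb : ℕ → ℕ → ℕ) (k : ℕ) : List ℕ → ℕ × ℕ
  | [] => (0, 0)
  | m :: l => utSG cmb k m l

lemma utSGof_concat (cmb : ℕ → ℕ → ℕ) (k : ℕ) (l : List ℕ) (hl : l ≠ []) (y : ℕ) :
    utSGof cmb k (l ++ [y]) = utStep cmb k (utSGof cmb k l) y := by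
  cases l with
  | nil => exact absurd rfl hl
  | cons m l' =>
    show utSG cmb k m (l' ++ [y]) = _
    rw [utSG_append]
    rfl

lemma utSGof_fst (cmb : ℕ → ℕ → ℕ) (k : ℕ) (hk : 1 ≤ k) :
    ∀ (l : List ℕ) (m : ℕ), (utSGof cmb k (m :: l)).1 = k * sumA (m :: l) - 1 := by
  intro l
  induction l using List.reverseRecOn with
  | nil =>
    intro m
    show utu k m = _
    rw [sumA_cons, sumA_nil]
    simp [utu]
  | append_singleton l y ih =>
    intro m
    rw [show m :: (l ++ [y]) = (m :: l) ++ [y] from rfl,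
      utSGof_concat cmb k _ (by simp) y]
    show (utSGof cmb k (m :: l)).1 + utu k y + 1 = _
    rw [ih m]
    have h1 : sumA ((m :: l) ++ [y]) = sumA (m :: l) + (y + 1) := by
      rw [sumA_append]; simp [sumA]
    rw [h1, Nat.mul_add]
    have h2 : 1 ≤ k * sumA (m :: l) :=
      Nat.one_le_iff_ne_zero.mpr (Nat.mul_ne_zero (by omega)
        (by have := sumA_pos m l; omega))
    have h3 : 1 ≤ k * (y + 1) :=
      Nat.one_le_iff_ne_zero.mpr (Nat.mul_ne_zero (by omega) (by omega))
    simp only [utu]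
    omega

lemma utG_ge (cmb : ℕ → ℕ → ℕ) (hd : ∀ x y, cmb x y = max x y) (k : ℕ) (hk : 1 ≤ k) :
    ∀ (l2 l1 : List ℕ) (mv : ℕ),
      k * sumA l1 + utw k mv + l2.length ≤ (utSGof cmb k (l1 ++ mv :: l2)).2 := by
  intro l2
  induction l2 using List.reverseRecOn with
  | nil =>
    intro l1 mv
    cases l1 with
    | nil =>
      show _ ≤ (utSG cmb k mv []).2
      simp [utSG, sumA]
    | cons m0 l1' =>
      rw [show (m0 :: l1') ++ mv :: [] = ((m0 :: l1') ++ [mv]) from by simp,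
        utSGof_concat cmb k _ (by simp) mv]
      show _ ≤ cmb ((utSGof cmb k (m0 :: l1')).1 + utw k mv + 1) (_ + 1)
      rw [hd, utSGof_fst cmb k hk l1' m0]
      have h2 : 1 ≤ k * sumA (m0 :: l1') :=
        Nat.one_le_iff_ne_zero.mpr (Nat.mul_ne_zero (by omega)
          (by have := sumA_pos m0 l1'; omega))
      have h3 := le_max_left ((k * sumA (m0 :: l1') - 1) + utw k mv + 1)
        ((utSGof cmb k (m0 :: l1')).2 + 1)
      simp only [List.length_nil]
      omega
  | append_singleton l2 y ih =>
    intro l1 mv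
    rw [show l1 ++ mv :: (l2 ++ [y]) = (l1 ++ mv :: l2) ++ [y] from by simp,
      utSGof_concat cmb k _ (by simp) y]
    show _ ≤ cmb _ ((utSGof cmb k (l1 ++ mv :: l2)).2 + 1)
    rw [hd]
    have h1 := ih l1 mv
    have h2 := le_max_right ((utSGof cmb k (l1 ++ mv :: l2)).1 + utw k y + 1)
      ((utSGof cmb k (l1 ++ mv :: l2)).2 + 1)
    have h3 : (l2 ++ [y]).length = l2.length + 1 := by simp
    omega

lemma utG_le (cmb : ℕ → ℕ → ℕ) (hd : ∀ x y, cmb x y = min x y) (k : ℕ) (hk : 1 ≤ k) :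
    ∀ (l2 l1 : List ℕ) (mv : ℕ),
      (utSGof cmb k (l1 ++ mv :: l2)).2 ≤ k * sumA l1 + utw k mv + l2.length := by
  intro l2
  induction l2 using List.reverseRecOn with
  | nil =>
    intro l1 mv
    cases l1 with
    | nil =>
      show (utSG cmb k mv []).2 ≤ _
      simp [utSG, sumA]
    | cons m0 l1' =>
      rw [show (m0 :: l1') ++ mv :: [] = ((m0 :: l1') ++ [mv]) from by simp,
        utSGof_concat cmb k _ (by simp) mv]
      show cmb ((utSGof cmb k (m0 :: l1')).1 + utw k mv + 1) (_ + 1) ≤ _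
      rw [hd, utSGof_fst cmb k hk l1' m0]
      have h2 : 1 ≤ k * sumA (m0 :: l1') :=
        Nat.one_le_iff_ne_zero.mpr (Nat.mul_ne_zero (by omega)
          (by have := sumA_pos m0 l1'; omega))
      have h3 := min_le_left ((k * sumA (m0 :: l1') - 1) + utw k mv + 1)
        ((utSGof cmb k (m0 :: l1')).2 + 1)
      simp only [List.length_nil]
      omega
  | append_singleton l2 y ih =>
    intro l1 mv
    rw [show l1 ++ mv :: (l2 ++ [y]) = (l1 ++ mv :: l2) ++ [y] from by simp,
      utSGof_concat cmb k _ (by simp) y]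
    show cmb _ ((utSGof cmb k (l1 ++ mv :: l2)).2 + 1) ≤ _
    rw [hd]
    have h1 := ih l1 mv
    have h2 := min_le_right ((utSGof cmb k (l1 ++ mv :: l2)).1 + utw k y + 1)
      ((utSGof cmb k (l1 ++ mv :: l2)).2 + 1)
    have h3 : (l2 ++ [y]).length = l2.length + 1 := by simp
    omega

lemma zero_cons_range' (j : ℕ) : (0 :: List.range' 1 j) = List.range (j + 1) := by
  rw [List.range_eq_range', List.range'_succ]

lemma utSG_id_fst (cmb : ℕ → ℕ → ℕ) (k : ℕ) (hk : 1 ≤ k) (j : ℕ) :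
    (utSG cmb k 0 (List.range' 1 j)).1 = k * triT (j + 1) - 1 := by
  have h1 := utSGof_fst cmb k hk (List.range' 1 j) 0
  have h2 : sumA (0 :: List.range' 1 j) = triT (j + 1) := by
    rw [zero_cons_range', sumA_range]
  rw [h2] at h1
  exact h1

lemma triT_pos (j : ℕ) : 1 ≤ triT (j + 1) := by
  show 1 ≤ triT j + (j + 1)
  omega

lemma utSG_id_incr (cmb : ℕ → ℕ → ℕ) (hd : ∀ x y, cmb x y = max x y) (k : ℕ)
    (hk : 1 ≤ k) : ∀ j, j ≤ k - 1 → (utSG cmb k 0 (List.range' 1 j)).2 = k * triT k + j := by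
  intro j
  induction j with
  | zero =>
    intro _
    show utw k 0 = _
    simp [utw, triT]
  | succ j ih =>
    intro hj
    have hcon : List.range' 1 (j + 1) = List.range' 1 j ++ [j + 1] := by
      have := List.range'_concat (step := 1) (s := 1) (n := j)
      simpa [Nat.add_comm] using this
    rw [hcon, utSG_append]
    show cmb ((utSG cmb k 0 (List.range' 1 j)).1 + utw k (j + 1) + 1)
      ((utSG cmb k 0 (List.range' 1 j)).2 + 1) = _
    rw [hd, ih (by omega), utSG_id_fst cmb k hk j]
    have hmono : k * triT (j + 1) ≤ k * triT k :=
      Nat.mul_le_mul_left _ (triT_mono (by omega))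
    have h1 : 1 ≤ k * triT (j + 1) :=
      Nat.one_le_iff_ne_zero.mpr (Nat.mul_ne_zero (by omega)
        (by have := triT_pos j; omega))
    simp only [utw]
    omega

lemma utSG_id_decr (cmb : ℕ → ℕ → ℕ) (hd : ∀ x y, cmb x y = min x y) (k : ℕ)
    (hk : 1 ≤ k) : ∀ j, j ≤ k - 1 → (utSG cmb k 0 (List.range' 1 j)).2 = k * triT k := by
  intro j
  induction j with
  | zero =>
    intro _
    show utw k 0 = _
    simp [utw, triT]
  | succ j ih =>
    intro hj
    have hcon : List.range' 1 (j + 1) = List.range' 1 j ++ [j + 1] := by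
      have := List.range'_concat (step := 1) (s := 1) (n := j)
      simpa [Nat.add_comm] using this
    rw [hcon, utSG_append]
    show cmb ((utSG cmb k 0 (List.range' 1 j)).1 + utw k (j + 1) + 1)
      ((utSG cmb k 0 (List.range' 1 j)).2 + 1) = _
    rw [hd, ih (by omega), utSG_id_fst cmb k hk j]
    have hmono : k * triT (j + 1) ≤ k * triT k :=
      Nat.mul_le_mul_left _ (triT_mono (by omega))
    have h1 : 1 ≤ k * triT (j + 1) :=
      Nat.one_le_iff_ne_zero.mpr (Nat.mul_ne_zero (by omega)
        (by have := triT_pos j; omega))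
    simp only [utw]
    omega

lemma utG_bound (cmb : ℕ → ℕ → ℕ)
    (hcd : (∀ x y, cmb x y = max x y) ∨ (∀ x y, cmb x y = min x y)) (k : ℕ) (hk : 1 ≤ k) :
    ∀ (l : List ℕ) (m : ℕ),
      (utSG cmb k m l).2 ≤ k * sumA (m :: l) + k * triT k + l.length := by
  intro l
  induction l using List.reverseRecOn with
  | nil =>
    intro m
    show utw k m ≤ _
    simp only [utw]
    omega
  | append_singleton l y ih =>
    intro m
    rw [utSG_append]
    show cmb ((utSG cmb k m l).1 + utw k y + 1) ((utSG cmb k m l).2 + 1) ≤ _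
    have hfst := utSGof_fst cmb k hk l m
    have h1 : sumA (m :: (l ++ [y])) = sumA (m :: l) + (y + 1) := by
      rw [show m :: (l ++ [y]) = (m :: l) ++ [y] from rfl, sumA_append]
      simp [sumA]
    have h2 : k * (sumA (m :: l) + (y + 1)) = k * sumA (m :: l) + k * (y + 1) :=
      Nat.mul_add _ _ _
    have h3 : 1 ≤ k * (y + 1) :=
      Nat.one_le_iff_ne_zero.mpr (Nat.mul_ne_zero (by omega) (by omega))
    have h4 := ih m
    have h5 : (l ++ [y]).length = l.length + 1 := by simp
    have hfst' : (utSG cmb k m l).1 = k * sumA (m :: l) - 1 := hfst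
    have h6 : utw k y ≤ k * triT k := by simp only [utw]; omega
    rcases hcd with hd | hd <;> rw [hd] <;> rw [h1, h2, h5] <;> omega

end Stmt9UTComb


section Stmt9UTEnd

set_option linter.unusedSectionVars false

variable {S : Type u} [BipotentSemiring S]

/-- The list of values of a permutation of `Fin k`. -/
def permL {k : ℕ} (σ : Equiv.Perm (Fin k)) : List ℕ :=
  List.ofFn (fun i : Fin k => ((σ i : Fin k) : ℕ))

lemma permL_length {k : ℕ} (σ : Equiv.Perm (Fin k)) : (permL σ).length = k := by
  simp [permL]

lemma permL_getElem {k : ℕ} (σ : Equiv.Perm (Fin k)) (i : ℕ) (hi : i < (permL σ).length) :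
    (permL σ)[i] = ((σ ⟨i, by simpa [permL] using hi⟩ : Fin k) : ℕ) := by
  simp [permL]

lemma take_permL_eq_range {k : ℕ} (σ : Equiv.Perm (Fin k)) (mFv : ℕ) (hm : mFv ≤ k)
    (hfix : ∀ j : Fin k, (j : ℕ) < mFv → σ j = j) :
    (permL σ).take mFv = List.range mFv := by
  apply List.ext_getElem
  · simp [permL]; omega
  · intro i h1 h2
    have hik : i < k := by simp [permL] at h1; omega
    have him : i < mFv := by simp [permL] at h1; omega
    rw [List.getElem_take, permL_getElem, List.getElem_range]
    have := hfix ⟨i, hik⟩ him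
    rw [this]

lemma permL_split {k : ℕ} (σ : Equiv.Perm (Fin k)) (r : ℕ) (hr : r < k) :
    permL σ = (permL σ).take r ++
      (permL σ)[r]'(by rw [permL_length]; omega) :: (permL σ).drop (r + 1) := by
  have h1 := List.take_append_drop r (permL σ)
  have h2 := List.drop_eq_getElem_cons (show r < (permL σ).length by rw [permL_length]; omega)
  rw [h2] at h1
  exact h1.symm

/-- Lower bound for `sumA` of a prefix of the permutation list. -/
lemma sumA_take_bound {k : ℕ} (σ : Equiv.Perm (Fin k)) (mFv r : ℕ)
    (hm : mFv < k) (hr : r ≤ k) (hmr : mFv < r)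
    (hfix : ∀ j : Fin k, (j : ℕ) < mFv → σ j = j)
    (hup : mFv + 1 ≤ ((σ ⟨mFv, hm⟩ : Fin k) : ℕ)) :
    triT mFv + (mFv + 2) ≤ sumA ((permL σ).take r) := by
  have hLlen : (permL σ).length = k := permL_length σ
  have h1 : (permL σ).take r = (permL σ).take mFv ++ ((permL σ).drop mFv).take (r - mFv) := by
    have := List.take_add (l := permL σ) (i := mFv) (j := r - mFv)
    rw [show mFv + (r - mFv) = r from by omega] at this
    exact this
  have h2 := List.drop_eq_getElem_cons (show mFv < (permL σ).length by omega)
  have h3 : ((permL σ).drop mFv).take (r - mFv) =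
      (permL σ)[mFv]'(by omega) :: ((permL σ).drop (mFv + 1)).take (r - mFv - 1) := by
    rw [h2, show r - mFv = (r - mFv - 1) + 1 from by omega]
    rfl
  have h4 : (permL σ).take mFv = List.range mFv := take_permL_eq_range σ mFv (by omega) hfix
  have h5 : mFv + 1 ≤ (permL σ)[mFv]'(by omega) := by
    rw [permL_getElem]
    exact hup
  rw [h1, h3, h4, sumA_append, sumA_cons, sumA_range]
  omega

lemma not_SP_UTMat {n : ℕ} (hn : 2 ≤ n)
    (h : ∀ k : ℕ, ∃ x : S,
      (Set.range (mpow x)).Infinite ∨ k < (Set.range (mpow x)).ncard) :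
    ¬ StronglyPermutable (UTMat S n) := by
  rintro ⟨k, hk2, hperm⟩
  letI : Mul {A : MatSR (Adj0 S) n // IsUT A} := (inferInstanceAs (Mul (UTMat S n)))
  obtain ⟨a, ha⟩ := h (20 * k * k * k + 20 * k + 20)
  have hinj := mpow_inj_of_card a _ ha
  obtain ⟨cmb, hcd, hc⟩ := exists_cmb a
  set s : Fin k → UTMat S n := fun t => ⟨utA a k n (t : ℕ), utA_isUT a k n (t : ℕ)⟩ with hs
  obtain ⟨σ, hσne, hσ⟩ := hperm s
  have hval : ∀ x y : UTMat S n, (x * y).1 = x.1 * y.1 := fun x y => rfl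
  have hkeyv : finProd (fun i : Fin k => (s (σ i)).val) =
      finProd (fun i : Fin k => (s i).val) := by
    have e1 := finProd_map (f := (Subtype.val : UTMat S n → MatSR (Adj0 S) n)) hval
      (fun i => s (σ i))
    have e2 := finProd_map (f := (Subtype.val : UTMat S n → MatSR (Adj0 S) n)) hval s
    calc finProd (fun i : Fin k => (s (σ i)).val)
        = Option.map Subtype.val (finProd fun i => s (σ i)) := e1
      _ = Option.map Subtype.val (finProd s) := congrArg _ hσ
      _ = finProd (fun i : Fin k => (s i).val) := e2.symm
  obtain ⟨k', rfl⟩ : ∃ k', k = k' + 1 := ⟨k - 1, by omega⟩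
  have hσlist : finProd (fun i : Fin (k' + 1) => (s (σ i)).val) =
      ((List.ofFn (fun i : Fin (k' + 1) => ((σ i : Fin (k' + 1)) : ℕ))).map
        (utA a (k' + 1) n)).foldl (optStep (· * ·)) none :=
    finProd_list _ _ _ (fun i => rfl)
  have hidlist : finProd (fun t : Fin (k' + 1) => (s t).val) =
      ((List.ofFn (fun t : Fin (k' + 1) => (t : ℕ))).map
        (utA a (k' + 1) n)).foldl (optStep (· * ·)) none :=
    finProd_list _ _ _ (fun i => rfl)
  rw [List.ofFn_succ] at hσlist hidlist
  have hkey := (hσlist.symm.trans hkeyv).trans hidlist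
  obtain ⟨P1, hP1, _, hP1G, _, _⟩ := master_UT a cmb hc (k' + 1) hn
      (List.ofFn (fun i : Fin k' => ((σ i.succ : Fin (k' + 1)) : ℕ)))
      ((σ 0 : Fin (k' + 1)) : ℕ)
  obtain ⟨P0, hP0, _, hP0G, _, _⟩ := master_UT a cmb hc (k' + 1) hn
      (List.ofFn (fun i : Fin k' => ((Fin.succ i : Fin (k' + 1)) : ℕ)))
      ((0 : Fin (k' + 1)) : ℕ)
  have hPP : P1 = P0 := Option.some_injective _ ((hP1.symm.trans hkey).trans hP0)
  set m1 : ℕ := ((σ 0 : Fin (k' + 1)) : ℕ) with hm1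
  set l1 : List ℕ := List.ofFn (fun i : Fin k' => ((σ i.succ : Fin (k' + 1)) : ℕ)) with hl1
  set l0 : List ℕ := List.ofFn (fun i : Fin k' => ((Fin.succ i : Fin (k' + 1)) : ℕ)) with hl0
  have hl0r : l0 = List.range' 1 k' := ofFn_succ_val_range' k'
  -- the two G-values agree
  have hGeq : (utSG cmb (k' + 1) m1 l1).2 = (utSG cmb (k' + 1) 0 (List.range' 1 k')).2 := by
    have hent : P1 ⟨0, by omega⟩ ⟨1, by omega⟩ = P0 ⟨0, by omega⟩ ⟨1, by omega⟩ := by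
      rw [hPP]
    rw [hP1G, hP0G] at hent
    have hmp := Adj0.elem.inj hent
    have hm0 : ((0 : Fin (k' + 1)) : ℕ) = 0 := rfl
    rw [hm0, hl0r] at hmp
    have hbσ : ∀ x ∈ m1 :: l1, x ≤ k' := by
      intro x hx
      rcases List.mem_cons.mp hx with rfl | hx
      · rw [hm1]; exact Fin.is_le _
      · rw [hl1] at hx
        obtain ⟨i, hi⟩ := List.mem_ofFn.mp hx
        rw [← hi]; exact Fin.is_le _
    have hlen1 : l1.length = k' := by rw [hl1]; simp
    have hsum1 : sumA (m1 :: l1) ≤ (k' + 1) * (k' + 1) := by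
      have h1 := sumA_le k' (m1 :: l1) hbσ
      rw [List.length_cons, hlen1] at h1
      exact h1
    have hb1 : (utSG cmb (k' + 1) m1 l1).2 ≤
        (k' + 1) * sumA (m1 :: l1) + (k' + 1) * triT (k' + 1) + l1.length :=
      utG_bound cmb hcd (k' + 1) (by omega) l1 m1
    have hq1 : (k' + 1) * sumA (m1 :: l1) ≤ (k' + 1) * ((k' + 1) * (k' + 1)) :=
      Nat.mul_le_mul_left _ hsum1
    have htk : (k' + 1) * triT (k' + 1) ≤ (k' + 1) * ((k' + 1) * (k' + 1)) :=
      Nat.mul_le_mul_left _ (triT_le_sq (k' + 1))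
    have hb0 : (utSG cmb (k' + 1) 0 (List.range' 1 k')).2 ≤
        (k' + 1) * sumA (0 :: List.range' 1 k') + (k' + 1) * triT (k' + 1) +
          (List.range' 1 k').length :=
      utG_bound cmb hcd (k' + 1) (by omega) _ 0
    have hsum0 : sumA (0 :: List.range' 1 k') = triT (k' + 1) := by
      rw [zero_cons_range', sumA_range]
    have hlen0 : (List.range' 1 k').length = k' := by simp
    apply hinj _ _ _ _ hmp
    · have hG1 : (utSG cmb (k' + 1) m1 l1).2 ≤
          (k' + 1) * ((k' + 1) * (k' + 1)) + (k' + 1) * ((k' + 1) * (k' + 1)) + k' := by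
        rw [hlen1] at hb1
        omega
      nlinarith
    · have hq0' : (k' + 1) * sumA (0 :: List.range' 1 k') = (k' + 1) * triT (k' + 1) := by
        rw [hsum0]
      have hG0 : (utSG cmb (k' + 1) 0 (List.range' 1 k')).2 ≤
          (k' + 1) * ((k' + 1) * (k' + 1)) + (k' + 1) * ((k' + 1) * (k' + 1)) + k' := by
        rw [hlen0] at hb0
        omega
      nlinarith
  -- least moved point
  obtain ⟨mF, hfix, hup, hrgt, hsmap⟩ := perm_least_moved σ hσne
  have hLcons : permL σ = m1 :: l1 := by
    rw [permL, List.ofFn_succ]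
  have hLsg : (utSGof cmb (k' + 1) (permL σ)).2 = (utSG cmb (k' + 1) m1 l1).2 := by
    rw [hLcons]
    rfl
  have hmFk : (mF : ℕ) < k' + 1 := mF.isLt
  rcases hcd with hd | hd
  · -- increasing case
    set r : ℕ := ((σ.symm mF : Fin (k' + 1)) : ℕ) with hrd
    have hrk : r < k' + 1 := (σ.symm mF).isLt
    have hsplit := permL_split σ r (by omega)
    have hLr : (permL σ)[r]'(by rw [permL_length]; omega) = (mF : ℕ) := by
      rw [permL_getElem]
      have : (⟨r, by omega⟩ : Fin (k' + 1)) = σ.symm mF := Fin.ext rfl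
      rw [this, hsmap]
    have hge := utG_ge cmb hd (k' + 1) (by omega) ((permL σ).drop (r + 1)) ((permL σ).take r)
      ((permL σ)[r]'(by rw [permL_length]; omega))
    rw [← hsplit] at hge
    have hsum := sumA_take_bound σ (mF : ℕ) r hmFk (by omega) hrgt hfix
      (by have := hup; simpa using this)
    have hGid := utSG_id_incr cmb hd (k' + 1) (by omega) k' (by omega)
    have ha1 : (k' + 1) * (triT (mF : ℕ) + ((mF : ℕ) + 2)) ≤
        (k' + 1) * sumA ((permL σ).take r) :=
      Nat.mul_le_mul_left _ hsum
    have ha2 : (k' + 1) * (triT (mF : ℕ) + ((mF : ℕ) + 2)) =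
        (k' + 1) * triT (mF : ℕ) + ((k' + 1) * (mF : ℕ) + (k' + 1) * 2) := by ring
    have ha3 : (k' + 1) * triT (mF : ℕ) ≤ (k' + 1) * triT (k' + 1) :=
      Nat.mul_le_mul_left _ (triT_mono (by omega))
    have ha4 : utw (k' + 1) (mF : ℕ) + (k' + 1) * triT (mF : ℕ) = (k' + 1) * triT (k' + 1) := by
      simp only [utw]; omega
    rw [hLr, hLsg] at hge
    rw [hGeq, hGid] at hge
    omega
  · -- decreasing case
    set v : ℕ := ((σ mF : Fin (k' + 1)) : ℕ) with hvd
    have hvk' : v ≤ k' := by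
      have := (σ mF).isLt; omega
    have hsplit := permL_split σ (mF : ℕ) (by omega)
    have hLm : (permL σ)[(mF : ℕ)]'(by rw [permL_length]; omega) = v := by
      rw [permL_getElem, hvd]
    have hle := utG_le cmb hd (k' + 1) (by omega) ((permL σ).drop ((mF : ℕ) + 1))
      ((permL σ).take (mF : ℕ)) ((permL σ)[(mF : ℕ)]'(by rw [permL_length]; omega))
    rw [← hsplit] at hle
    have htake : (permL σ).take (mF : ℕ) = List.range (mF : ℕ) :=
      take_permL_eq_range σ (mF : ℕ) (by omega) hfix
    have hGid := utSG_id_decr cmb hd (k' + 1) (by omega) k' (by omega)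
    have ha3 : (k' + 1) * triT v ≤ (k' + 1) * triT (k' + 1) :=
      Nat.mul_le_mul_left _ (triT_mono (by omega))
    have ha5 : (k' + 1) * triT ((mF : ℕ) + 1) ≤ (k' + 1) * triT v := by
      refine Nat.mul_le_mul_left _ (triT_mono ?_)
      rw [hvd]
      exact hup
    have ha6 : (k' + 1) * triT ((mF : ℕ) + 1) =
        (k' + 1) * triT (mF : ℕ) + ((k' + 1) * (mF : ℕ) + (k' + 1) * 1) := by
      show (k' + 1) * (triT (mF : ℕ) + ((mF : ℕ) + 1)) = _
      ring
    have ha4 : utw (k' + 1) v + (k' + 1) * triT v = (k' + 1) * triT (k' + 1) := by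
      simp only [utw]; omega
    rw [hLm, hLsg, htake, sumA_range] at hle
    rw [hGeq, hGid] at hle
    have hlend : ((permL σ).drop ((mF : ℕ) + 1)).length = (k' + 1) - ((mF : ℕ) + 1) := by
      rw [List.length_drop, permL_length]
    rw [hlend] at hle
    omega

end Stmt9UTEnd



section Stmt9U

set_option linter.unusedSectionVars false

variable {S : Type u} [BipotentSemiring S]

/-- Witness matrices in `U_n(S)`. -/
def uA (a : S) (al be : ℕ → ℕ) (n m : ℕ) : MatSR (Adj01 S) n := fun i j =>
  if (i : ℕ) = (j : ℕ) then Adj01.one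
  else if (i : ℕ) = 0 ∧ (j : ℕ) = 1 then Adj01.elem (mpow a (al m))
  else if (i : ℕ) = 1 ∧ (j : ℕ) = 2 then Adj01.elem (mpow a (be m))
  else Adj01.zero

lemma uA_isU (a : S) (al be : ℕ → ℕ) (n m : ℕ) : IsU (uA a al be n m) := by
  refine ⟨?_, ?_, ?_⟩
  · intro i j hji
    simp only [uA]
    rw [if_neg (by omega), if_neg (by omega), if_neg (by omega)]
  · intro i
    simp [uA]
  · intro i j hij
    simp only [uA]
    rw [if_neg (by omega)]
    split_ifs <;> simp

def uStep (cmb : ℕ → ℕ → ℕ) (al be : ℕ → ℕ) : ℕ × Option ℕ → ℕ → ℕ × Option ℕ :=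
  fun p z => (cmb (al z) p.1,
    some (p.2.elim (p.1 + be z + 1) (fun f => cmb (p.1 + be z + 1) f)))

def uSG (cmb : ℕ → ℕ → ℕ) (al be : ℕ → ℕ) (m : ℕ) (l : List ℕ) : ℕ × Option ℕ :=
  l.foldl (uStep cmb al be) (al m, none)

lemma uSG_append (cmb : ℕ → ℕ → ℕ) (al be : ℕ → ℕ) (m : ℕ) (l : List ℕ) (y : ℕ) :
    uSG cmb al be m (l ++ [y]) = uStep cmb al be (uSG cmb al be m l) y := by
  simp [uSG, List.foldl_append]

lemma master_U (a : S) (cmb : ℕ → ℕ → ℕ) (al be : ℕ → ℕ)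
    (hc : ∀ x y, mpow a x + mpow a y = mpow a (cmb x y))
    {n : ℕ} (hn : 3 ≤ n) : ∀ (l : List ℕ) (m : ℕ), ∃ P : MatSR (Adj01 S) n,
    ((m :: l).map (uA a al be n)).foldl (optStep (· * ·)) none = some P ∧
    P ⟨0, by omega⟩ ⟨0, by omega⟩ = Adj01.one ∧
    P ⟨0, by omega⟩ ⟨1, by omega⟩ = Adj01.elem (mpow a (uSG cmb al be m l).1) ∧
    P ⟨0, by omega⟩ ⟨2, by omega⟩ =
      (uSG cmb al be m l).2.elim Adj01.zero (fun F => Adj01.elem (mpow a F)) := by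
  have hn0 : n ≠ 0 := by omega
  set i0 : Fin n := ⟨0, by omega⟩ with hi0
  set i1 : Fin n := ⟨1, by omega⟩ with hi1
  set i2 : Fin n := ⟨2, by omega⟩ with hi2
  have hne01 : i0 ≠ i1 := by
    intro hcon; exact absurd (congrArg Fin.val hcon) (by simp [hi0, hi1])
  have hne12 : i1 ≠ i2 := by
    intro hcon; exact absurd (congrArg Fin.val hcon) (by simp [hi1, hi2])
  have hA00 : ∀ m, uA a al be n m i0 i0 = Adj01.one := by intro m; simp [uA, hi0]
  have hA01 : ∀ m, uA a al be n m i0 i1 = Adj01.elem (mpow a (al m)) := by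
    intro m; simp [uA, hi0, hi1]
  have hA11 : ∀ m, uA a al be n m i1 i1 = Adj01.one := by intro m; simp [uA, hi1]
  have hA12 : ∀ m, uA a al be n m i1 i2 = Adj01.elem (mpow a (be m)) := by
    intro m; simp [uA, hi1, hi2]
  have hA22 : ∀ m, uA a al be n m i2 i2 = Adj01.one := by intro m; simp [uA, hi2]
  have hA02 : ∀ m, uA a al be n m i0 i2 = Adj01.zero := by
    intro m
    simp only [uA, hi0, hi2]
    norm_num
  have hAc0 : ∀ m (c : Fin n), c ≠ i0 → uA a al be n m c i0 = Adj01.zero := by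
    intro m c hc0
    have hcv : (c : ℕ) ≠ 0 := fun hcon => hc0 (Fin.ext hcon)
    have hv0 : ((⟨0, by omega⟩ : Fin n) : ℕ) = 0 := rfl
    have hv1 : ((⟨1, by omega⟩ : Fin n) : ℕ) = 1 := rfl
    have hv2 : ((⟨2, by omega⟩ : Fin n) : ℕ) = 2 := rfl
    simp only [uA]
    rw [if_neg (by omega), if_neg (by omega), if_neg (by omega)]
  have hAc1 : ∀ m (c : Fin n), c ≠ i0 → c ≠ i1 → uA a al be n m c i1 = Adj01.zero := by
    intro m c hc0 hc1
    have hcv0 : (c : ℕ) ≠ 0 := fun hcon => hc0 (Fin.ext hcon)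
    have hcv1 : (c : ℕ) ≠ 1 := fun hcon => hc1 (Fin.ext hcon)
    simp only [uA]
    rw [if_neg (by omega), if_neg (by omega), if_neg (by omega)]
  have hAc2 : ∀ m (c : Fin n), c ≠ i1 → c ≠ i2 → uA a al be n m c i2 = Adj01.zero := by
    intro m c hc1 hc2
    have hcv1 : (c : ℕ) ≠ 1 := fun hcon => hc1 (Fin.ext hcon)
    have hcv2 : (c : ℕ) ≠ 2 := fun hcon => hc2 (Fin.ext hcon)
    have hv0 : ((⟨0, by omega⟩ : Fin n) : ℕ) = 0 := rfl
    have hv1 : ((⟨1, by omega⟩ : Fin n) : ℕ) = 1 := rfl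
    have hv2 : ((⟨2, by omega⟩ : Fin n) : ℕ) = 2 := rfl
    simp only [uA]
    rw [if_neg (by omega), if_neg (by omega), if_neg (by omega)]
  intro l
  induction l using List.reverseRecOn with
  | nil =>
    intro m
    exact ⟨uA a al be n m, rfl, hA00 m, hA01 m, hA02 m⟩
  | append_singleton l y ih =>
    intro m
    obtain ⟨P, hP, h00, h01, h02⟩ := ih m
    refine ⟨P * uA a al be n y, ?_, ?_, ?_, ?_⟩
    · rw [show m :: (l ++ [y]) = (m :: l) ++ [y] from rfl, List.map_append,
        List.foldl_append, hP]
      rfl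
    · rw [matMul_apply, finSum_eq_sum hn0, Finset.sum_eq_single i0]
      · rw [h00, hA00, Adj01.one_mul]
      · intro c _ hc
        rw [hAc0 y c hc, Adj01.mul_zero]
        rfl
      · intro hmem; exact absurd (Finset.mem_univ _) hmem
    · rw [matMul_apply, finSum_eq_sum hn0]
      have hsub : ∑ c, P i0 c * uA a al be n y c i1 =
          ∑ c ∈ ({i0, i1} : Finset (Fin n)), P i0 c * uA a al be n y c i1 := by
        refine (Finset.sum_subset (Finset.subset_univ _) ?_).symm
        intro c _ hc
        simp only [Finset.mem_insert, Finset.mem_singleton] at hc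
        push_neg at hc
        rw [hAc1 y c hc.1 hc.2, Adj01.mul_zero]
        rfl
      rw [hsub, Finset.sum_pair hne01, h00, h01, hA01, hA11, Adj01.one_mul,
        Adj01.mul_one, Adj01.elem_add_elem, hc, uSG_append]
      rfl
    · rw [matMul_apply, finSum_eq_sum hn0]
      have hsub : ∑ c, P i0 c * uA a al be n y c i2 =
          ∑ c ∈ ({i1, i2} : Finset (Fin n)), P i0 c * uA a al be n y c i2 := by
        refine (Finset.sum_subset (Finset.subset_univ _) ?_).symm
        intro c _ hc
        simp only [Finset.mem_insert, Finset.mem_singleton] at hc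
        push_neg at hc
        rw [hAc2 y c hc.1 hc.2, Adj01.mul_zero]
        rfl
      rw [hsub, Finset.sum_pair hne12, h01, h02, hA12, hA22,
        Adj01.elem_mul_elem, mpow_mul_mpow, Adj01.mul_one, uSG_append]
      simp only [uStep]
      cases hsnd : (uSG cmb al be m l).2 with
      | none =>
        simp only [Option.elim]
        rw [Adj01.add_zero]
      | some F =>
        simp only [Option.elim]
        rw [Adj01.elem_add_elem, hc]

end Stmt9U


section Stmt9UComb

set_option linter.unusedSectionVars false

lemma range'_one_concat (j : ℕ) : List.range' 1 (j + 1) = List.range' 1 j ++ [j + 1] := by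
  have := List.range'_concat (step := 1) (s := 1) (n := j)
  simpa [Nat.add_comm] using this

lemma list_split {α : Type*} (l : List α) (i : ℕ) (h : i < l.length) :
    l = l.take i ++ l[i] :: l.drop (i + 1) := by
  have h1 := List.take_append_drop i l
  rw [List.drop_eq_getElem_cons h] at h1
  exact h1.symm

variable (cmb : ℕ → ℕ → ℕ) (al be : ℕ → ℕ)

lemma uSG_fst_ge (hd : ∀ x y, cmb x y = max x y) :
    ∀ (l : List ℕ) (m x : ℕ), x ∈ m :: l → al x ≤ (uSG cmb al be m l).1 := by
  intro l
  induction l using List.reverseRecOn with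
  | nil =>
    intro m x hx
    simp at hx
    subst hx
    exact le_rfl
  | append_singleton l y ih =>
    intro m x hx
    rw [uSG_append]
    show al x ≤ cmb (al y) (uSG cmb al be m l).1
    rw [hd]
    rcases List.mem_cons.mp hx with rfl | hx'
    · exact le_trans (ih x x (by simp)) (le_max_right _ _)
    · rcases List.mem_append.mp hx' with hx'' | hx''
      · exact le_trans (ih m x (by simp [hx''])) (le_max_right _ _)
      · simp at hx''
        subst hx''
        exact le_max_left _ _

lemma uSG_fst_le (hd : ∀ x y, cmb x y = min x y) :
    ∀ (l : List ℕ) (m x : ℕ), x ∈ m :: l → (uSG cmb al be m l).1 ≤ al x := by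
  intro l
  induction l using List.reverseRecOn with
  | nil =>
    intro m x hx
    simp at hx
    subst hx
    exact le_rfl
  | append_singleton l y ih =>
    intro m x hx
    rw [uSG_append]
    show cmb (al y) (uSG cmb al be m l).1 ≤ al x
    rw [hd]
    rcases List.mem_cons.mp hx with rfl | hx'
    · exact le_trans (min_le_right _ _) (ih x x (by simp))
    · rcases List.mem_append.mp hx' with hx'' | hx''
      · exact le_trans (min_le_right _ _) (ih m x (by simp [hx'']))
      · simp at hx''
        subst hx''
        exact min_le_left _ _

lemma uF_ge (hd : ∀ x y, cmb x y = max x y) :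
    ∀ (l3 : List ℕ) (m : ℕ) (l12 : List ℕ) (x y : ℕ), x ∈ m :: l12 →
      ∃ F, (uSG cmb al be m (l12 ++ y :: l3)).2 = some F ∧ al x + be y + 1 ≤ F := by
  intro l3
  induction l3 using List.reverseRecOn with
  | nil =>
    intro m l12 x y hx
    rw [show l12 ++ y :: [] = l12 ++ [y] from rfl, uSG_append]
    refine ⟨_, rfl, ?_⟩
    have hfst := uSG_fst_ge cmb al be hd l12 m x hx
    cases hP : (uSG cmb al be m l12).2 with
    | none => simp only [uStep, hP, Option.elim]; omega
    | some f =>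
      simp only [uStep, hP, Option.elim]
      rw [hd]
      have := le_max_left ((uSG cmb al be m l12).1 + be y + 1) f
      omega
  | append_singleton l3 z ih =>
    intro m l12 x y hx
    rw [show l12 ++ y :: (l3 ++ [z]) = (l12 ++ y :: l3) ++ [z] from by simp, uSG_append]
    obtain ⟨F, hF, hFb⟩ := ih m l12 x y hx
    refine ⟨_, rfl, ?_⟩
    simp only [uStep, hF, Option.elim]
    rw [hd]
    have := le_max_right ((uSG cmb al be m (l12 ++ y :: l3)).1 + be z + 1) F
    omega

lemma uF_le (hd : ∀ x y, cmb x y = min x y) :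
    ∀ (l3 : List ℕ) (m : ℕ) (l12 : List ℕ) (x y : ℕ), x ∈ m :: l12 →
      ∃ F, (uSG cmb al be m (l12 ++ y :: l3)).2 = some F ∧ F ≤ al x + be y + 1 := by
  intro l3
  induction l3 using List.reverseRecOn with
  | nil =>
    intro m l12 x y hx
    rw [show l12 ++ y :: [] = l12 ++ [y] from rfl, uSG_append]
    refine ⟨_, rfl, ?_⟩
    have hfst := uSG_fst_le cmb al be hd l12 m x hx
    cases hP : (uSG cmb al be m l12).2 with
    | none => simp only [uStep, hP, Option.elim]; omega
    | some f =>
      simp only [uStep, hP, Option.elim]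
      rw [hd]
      have := min_le_left ((uSG cmb al be m l12).1 + be y + 1) f
      omega
  | append_singleton l3 z ih =>
    intro m l12 x y hx
    rw [show l12 ++ y :: (l3 ++ [z]) = (l12 ++ y :: l3) ++ [z] from by simp, uSG_append]
    obtain ⟨F, hF, hFb⟩ := ih m l12 x y hx
    refine ⟨_, rfl, ?_⟩
    simp only [uStep, hF, Option.elim]
    rw [hd]
    have := min_le_right ((uSG cmb al be m (l12 ++ y :: l3)).1 + be z + 1) F
    omega

lemma uF_bound
    (hcd : (∀ x y, cmb x y = max x y) ∨ (∀ x y, cmb x y = min x y)) (K : ℕ) :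
    ∀ (l : List ℕ) (m : ℕ), (∀ x ∈ m :: l, al x ≤ K ∧ be x ≤ K) →
      (uSG cmb al be m l).1 ≤ K ∧
      (∀ F, (uSG cmb al be m l).2 = some F → F ≤ 2 * K + 1) := by
  intro l
  induction l using List.reverseRecOn with
  | nil =>
    intro m hb
    refine ⟨(hb m (by simp)).1, ?_⟩
    intro F hF
    exact absurd hF (by simp [uSG])
  | append_singleton l y ih =>
    intro m hb
    have hb' : ∀ x ∈ m :: l, al x ≤ K ∧ be x ≤ K := by
      intro x hx
      apply hb
      rcases List.mem_cons.mp hx with rfl | hx'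
      · simp
      · simp [hx']
    obtain ⟨ih1, ih2⟩ := ih m hb'
    have hby : al y ≤ K ∧ be y ≤ K := hb y (by simp)
    rw [uSG_append]
    constructor
    · show cmb (al y) (uSG cmb al be m l).1 ≤ K
      rcases hcd with hd | hd <;> rw [hd] <;> omega
    · intro F hF
      simp only [uStep] at hF
      have hF' := Option.some.inj hF
      cases hP : (uSG cmb al be m l).2 with
      | none =>
        rw [hP] at hF'
        simp only [Option.elim] at hF'
        omega
      | some f =>
        rw [hP] at hF'
        simp only [Option.elim] at hF'
        have hf := ih2 f hP
        rcases hcd with hd | hd <;> rw [hd] at hF' <;> omega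

lemma uFst_id_incr (k : ℕ) (hd : ∀ x y, cmb x y = max x y) :
    ∀ j, (uSG cmb (fun m => m) (fun m => k - m) 0 (List.range' 1 j)).1 = j := by
  intro j
  induction j with
  | zero => rfl
  | succ j ih =>
    rw [range'_one_concat, uSG_append]
    show cmb (j + 1) (uSG cmb (fun m => m) (fun m => k - m) 0 (List.range' 1 j)).1 = j + 1
    rw [hd, ih]
    omega

lemma uF_id_incr (k : ℕ) (hd : ∀ x y, cmb x y = max x y) :
    ∀ j, j + 1 ≤ k →
      (uSG cmb (fun m => m) (fun m => k - m) 0 (List.range' 1 (j + 1))).2 = some k := by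
  intro j
  induction j with
  | zero =>
    intro hk
    show (uSG cmb (fun m => m) (fun m => k - m) 0 [1]).2 = some k
    simp only [uSG, List.foldl_cons, List.foldl_nil, uStep, Option.elim]
    congr 1
    omega
  | succ j ih =>
    intro hk
    rw [range'_one_concat, uSG_append]
    simp only [uStep, ih (by omega), Option.elim]
    rw [uFst_id_incr cmb k hd, hd]
    congr 1
    omega

lemma uFst_id_decr (k : ℕ) (hd : ∀ x y, cmb x y = min x y) :
    ∀ j, j ≤ k → (uSG cmb (fun m => k - m) (fun m => m) 0 (List.range' 1 j)).1 = k - j := by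
  intro j
  induction j with
  | zero => intro _; rfl
  | succ j ih =>
    intro hj
    rw [range'_one_concat, uSG_append]
    show cmb (k - (j + 1)) (uSG cmb (fun m => k - m) (fun m => m) 0 (List.range' 1 j)).1 = _
    rw [hd, ih (by omega)]
    omega

lemma uF_id_decr (k : ℕ) (hd : ∀ x y, cmb x y = min x y) :
    ∀ j, j + 1 ≤ k →
      (uSG cmb (fun m => k - m) (fun m => m) 0 (List.range' 1 (j + 1))).2 = some (k + 2) := by
  intro j
  induction j with
  | zero =>
    intro hk
    show (uSG cmb (fun m => k - m) (fun m => m) 0 [1]).2 = some (k + 2)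
    simp only [uSG, List.foldl_cons, List.foldl_nil, uStep, Option.elim]
    refine congrArg some ?_
    omega
  | succ j ih =>
    intro hk
    rw [range'_one_concat, uSG_append]
    simp only [uStep, ih (by omega), Option.elim]
    rw [uFst_id_decr cmb k hd (j + 1) (by omega), hd]
    congr 1
    omega

end Stmt9UComb


section Stmt9UEnd

set_option linter.unusedSectionVars false

variable {S : Type u} [BipotentSemiring S]

/-- The tail of the value list of a permutation of `Fin (k'+1)`. -/
def permTL {k' : ℕ} (σ : Equiv.Perm (Fin (k' + 1))) : List ℕ :=
  List.ofFn (fun i : Fin k' => ((σ i.succ : Fin (k' + 1)) : ℕ))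

lemma permTL_length {k' : ℕ} (σ : Equiv.Perm (Fin (k' + 1))) : (permTL σ).length = k' := by
  simp [permTL]

lemma permTL_getElem {k' : ℕ} (σ : Equiv.Perm (Fin (k' + 1))) (i : ℕ)
    (hi : i < (permTL σ).length) :
    (permTL σ)[i] =
      ((σ (Fin.succ ⟨i, by simpa [permTL] using hi⟩) : Fin (k' + 1)) : ℕ) := by
  simp [permTL]

def uWit (a : S) (al be : ℕ → ℕ) (n k : ℕ) : Fin k → UMat S n :=
  fun t => ⟨uA a al be n (t : ℕ), uA_isU a al be n (t : ℕ)⟩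

lemma uMat_perm_entry {n : ℕ} (hn : 3 ≤ n) (a : S) (cmb : ℕ → ℕ → ℕ) (al be : ℕ → ℕ)
    (hc : ∀ x y, mpow a x + mpow a y = mpow a (cmb x y)) (k' : ℕ)
    (σ : Equiv.Perm (Fin (k' + 1)))
    (hσ : finProd (fun i => uWit a al be n (k' + 1) (σ i)) =
      finProd (uWit a al be n (k' + 1))) :
    ((uSG cmb al be ((σ 0 : Fin (k' + 1)) : ℕ) (permTL σ)).2).elim Adj01.zero
      (fun F => Adj01.elem (mpow a F)) =
    ((uSG cmb al be 0 (List.range' 1 k')).2).elim Adj01.zero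
      (fun F => Adj01.elem (mpow a F)) := by
  letI : Mul {A : MatSR (Adj01 S) n // IsU A} := (inferInstanceAs (Mul (UMat S n)))
  set s : Fin (k' + 1) → UMat S n := uWit a al be n (k' + 1) with hs
  have hval : ∀ x y : UMat S n, (x * y).1 = x.1 * y.1 := fun x y => rfl
  have hkeyv : finProd (fun i : Fin (k' + 1) => (s (σ i)).val) =
      finProd (fun i : Fin (k' + 1) => (s i).val) := by
    have e1 := finProd_map (f := (Subtype.val : UMat S n → MatSR (Adj01 S) n)) hval
      (fun i => s (σ i))
    have e2 := finProd_map (f := (Subtype.val : UMat S n → MatSR (Adj01 S) n)) hval s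
    calc finProd (fun i : Fin (k' + 1) => (s (σ i)).val)
        = Option.map Subtype.val (finProd fun i => s (σ i)) := e1
      _ = Option.map Subtype.val (finProd s) := congrArg _ hσ
      _ = finProd (fun i : Fin (k' + 1) => (s i).val) := e2.symm
  have hσlist : finProd (fun i : Fin (k' + 1) => (s (σ i)).val) =
      ((List.ofFn (fun i : Fin (k' + 1) => ((σ i : Fin (k' + 1)) : ℕ))).map
        (uA a al be n)).foldl (optStep (· * ·)) none :=
    finProd_list _ _ _ (fun i => rfl)
  have hidlist : finProd (fun t : Fin (k' + 1) => (s t).val) =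
      ((List.ofFn (fun t : Fin (k' + 1) => (t : ℕ))).map
        (uA a al be n)).foldl (optStep (· * ·)) none :=
    finProd_list _ _ _ (fun i => rfl)
  rw [List.ofFn_succ] at hσlist hidlist
  have hkey := (hσlist.symm.trans hkeyv).trans hidlist
  obtain ⟨P1, hP1, _, _, hP1F⟩ := master_U a cmb al be hc hn (permTL σ)
      ((σ 0 : Fin (k' + 1)) : ℕ)
  obtain ⟨P0, hP0, _, _, hP0F⟩ := master_U a cmb al be hc hn
      (List.ofFn fun i : Fin k' => ((Fin.succ i : Fin (k' + 1)) : ℕ))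
      ((0 : Fin (k' + 1)) : ℕ)
  have hPP : P1 = P0 := Option.some_injective _ ((hP1.symm.trans hkey).trans hP0)
  have hent : P1 ⟨0, by omega⟩ ⟨2, by omega⟩ = P0 ⟨0, by omega⟩ ⟨2, by omega⟩ := by
    rw [hPP]
  rw [hP1F, hP0F] at hent
  have hm0 : ((0 : Fin (k' + 1)) : ℕ) = 0 := rfl
  have hl0r : (List.ofFn fun i : Fin k' => ((Fin.succ i : Fin (k' + 1)) : ℕ)) =
      List.range' 1 k' := ofFn_succ_val_range' k'
  rw [hm0, hl0r] at hent
  exact hent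

lemma not_SP_UMat3 {n : ℕ} (hn : 3 ≤ n)
    (h : ∀ k : ℕ, ∃ x : S,
      (Set.range (mpow x)).Infinite ∨ k < (Set.range (mpow x)).ncard) :
    ¬ StronglyPermutable (UMat S n) := by
  rintro ⟨k, hk2, hperm⟩
  letI : Mul {A : MatSR (Adj01 S) n // IsU A} := (inferInstanceAs (Mul (UMat S n)))
  obtain ⟨a, ha⟩ := h (20 * k + 20)
  have hinj := mpow_inj_of_card a _ ha
  obtain ⟨cmb, hcd, hc⟩ := exists_cmb a
  obtain ⟨k', rfl⟩ : ∃ k', k = k' + 1 := ⟨k - 1, by omega⟩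
  rcases hcd with hd | hd
  · -- increasing case
    obtain ⟨σ, hσne, hσ⟩ := hperm (uWit a (fun m => m) (fun m => (k' + 1) - m) n (k' + 1))
    have hent := uMat_perm_entry hn a cmb (fun m => m) (fun m => (k' + 1) - m) hc k' σ hσ
    obtain ⟨mF, hfix, hup, hrgt, hsmap⟩ := perm_least_moved σ hσne
    set r : ℕ := ((σ.symm mF : Fin (k' + 1)) : ℕ) with hrd
    have hrk : r < k' + 1 := (σ.symm mF).isLt
    have hr1 : 1 ≤ r := by omega
    have hl1len : (permTL σ).length = k' := permTL_length σ
    have hsplit := list_split (permTL σ) (r - 1) (by omega)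
    have hl1r : (permTL σ)[r - 1]'(by omega) = (mF : ℕ) := by
      rw [permTL_getElem]
      have heq : (Fin.succ (⟨r - 1, by omega⟩ : Fin k') : Fin (k' + 1)) = σ.symm mF := by
        apply Fin.ext
        simp [Fin.val_succ]
        omega
      rw [heq, hsmap]
    have hxmem : ((σ mF : Fin (k' + 1)) : ℕ) ∈
        ((σ 0 : Fin (k' + 1)) : ℕ) :: (permTL σ).take (r - 1) := by
      rcases Nat.eq_zero_or_pos (mF : ℕ) with hz | hpos
      · refine List.mem_cons.mpr (Or.inl ?_)
        have : mF = (0 : Fin (k' + 1)) := Fin.ext (by simpa using hz)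
        rw [this]
      · refine List.mem_cons.mpr (Or.inr ?_)
        have hlt : (mF : ℕ) - 1 < ((permTL σ).take (r - 1)).length := by
          rw [List.length_take]
          omega
        have h1 : ((permTL σ).take (r - 1))[(mF : ℕ) - 1]'hlt ∈ (permTL σ).take (r - 1) :=
          List.getElem_mem _
        have h2 : ((permTL σ).take (r - 1))[(mF : ℕ) - 1]'hlt =
            ((σ mF : Fin (k' + 1)) : ℕ) := by
          rw [List.getElem_take, permTL_getElem]
          have heq : (Fin.succ (⟨(mF : ℕ) - 1, by omega⟩ : Fin k') : Fin (k' + 1)) = mF := by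
            apply Fin.ext
            simp [Fin.val_succ]
            omega
          rw [heq]
        rwa [h2] at h1
    obtain ⟨Fσ, hFσ, hFσb⟩ := uF_ge cmb (fun m => m) (fun m => (k' + 1) - m) hd
      ((permTL σ).drop r) ((σ 0 : Fin (k' + 1)) : ℕ) ((permTL σ).take (r - 1))
      ((σ mF : Fin (k' + 1)) : ℕ) ((permTL σ)[r - 1]'(by omega)) hxmem
    have hsplit' : permTL σ = (permTL σ).take (r - 1) ++
        ((permTL σ)[r - 1]'(by omega)) :: (permTL σ).drop r := by
      have hh := hsplit
      rw [show (r - 1) + 1 = r from by omega] at hh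
      exact hh
    rw [← hsplit'] at hFσ
    rw [hl1r] at hFσb
    have hFid := uF_id_incr cmb (k' + 1) hd (k' - 1) (by omega)
    rw [show k' - 1 + 1 = k' from by omega] at hFid
    rw [hFσ, hFid] at hent
    simp only [Option.elim] at hent
    have hF := Adj01.elem.inj hent
    have hbmem : ∀ x ∈ ((σ 0 : Fin (k' + 1)) : ℕ) :: permTL σ,
        (fun m => m) x ≤ (k' + 1) ∧ (fun m => (k' + 1) - m) x ≤ (k' + 1) := by
      intro x hx
      have hxle : x ≤ k' := by
        rcases List.mem_cons.mp hx with rfl | hx'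
        · exact Fin.is_le _
        · rw [permTL] at hx'
          obtain ⟨i, hi⟩ := List.mem_ofFn.mp hx'
          rw [← hi]; exact Fin.is_le _
      refine ⟨?_, ?_⟩
      · show x ≤ k' + 1
        omega
      · show (k' + 1) - x ≤ k' + 1
        omega
    have hFb2 := (uF_bound cmb (fun m => m) (fun m => (k' + 1) - m) (Or.inl hd)
      (k' + 1) (permTL σ) ((σ 0 : Fin (k' + 1)) : ℕ) hbmem).2 Fσ hFσ
    have hFeq := hinj Fσ (k' + 1) (by omega) (by omega) hF
    have hx : (mF : ℕ) + 1 ≤ ((σ mF : Fin (k' + 1)) : ℕ) := hup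
    have hmFle : (mF : ℕ) ≤ k' := by have := mF.isLt; omega
    have hFσb' : ((σ mF : Fin (k' + 1)) : ℕ) + ((k' + 1) - (mF : ℕ)) + 1 ≤ Fσ := hFσb
    omega
  · -- decreasing case
    obtain ⟨σ, hσne, hσ⟩ := hperm (uWit a (fun m => (k' + 1) - m) (fun m => m) n (k' + 1))
    have hent := uMat_perm_entry hn a cmb (fun m => (k' + 1) - m) (fun m => m) hc k' σ hσ
    obtain ⟨mF, hfix, hup, hrgt, hsmap⟩ := perm_least_moved σ hσne
    set r : ℕ := ((σ.symm mF : Fin (k' + 1)) : ℕ) with hrd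
    have hrk : r < k' + 1 := (σ.symm mF).isLt
    have hr1 : 1 ≤ r := by omega
    have hl1len : (permTL σ).length = k' := permTL_length σ
    have hsplit := list_split (permTL σ) (r - 1) (by omega)
    have hl1r : (permTL σ)[r - 1]'(by omega) = (mF : ℕ) := by
      rw [permTL_getElem]
      have heq : (Fin.succ (⟨r - 1, by omega⟩ : Fin k') : Fin (k' + 1)) = σ.symm mF := by
        apply Fin.ext
        simp [Fin.val_succ]
        omega
      rw [heq, hsmap]
    have hxmem : ((σ mF : Fin (k' + 1)) : ℕ) ∈
        ((σ 0 : Fin (k' + 1)) : ℕ) :: (permTL σ).take (r - 1) := by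
      rcases Nat.eq_zero_or_pos (mF : ℕ) with hz | hpos
      · refine List.mem_cons.mpr (Or.inl ?_)
        have : mF = (0 : Fin (k' + 1)) := Fin.ext (by simpa using hz)
        rw [this]
      · refine List.mem_cons.mpr (Or.inr ?_)
        have hlt : (mF : ℕ) - 1 < ((permTL σ).take (r - 1)).length := by
          rw [List.length_take]
          omega
        have h1 : ((permTL σ).take (r - 1))[(mF : ℕ) - 1]'hlt ∈ (permTL σ).take (r - 1) :=
          List.getElem_mem _
        have h2 : ((permTL σ).take (r - 1))[(mF : ℕ) - 1]'hlt =
            ((σ mF : Fin (k' + 1)) : ℕ) := by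
          rw [List.getElem_take, permTL_getElem]
          have heq : (Fin.succ (⟨(mF : ℕ) - 1, by omega⟩ : Fin k') : Fin (k' + 1)) = mF := by
            apply Fin.ext
            simp [Fin.val_succ]
            omega
          rw [heq]
        rwa [h2] at h1
    obtain ⟨Fσ, hFσ, hFσb⟩ := uF_le cmb (fun m => (k' + 1) - m) (fun m => m) hd
      ((permTL σ).drop r) ((σ 0 : Fin (k' + 1)) : ℕ) ((permTL σ).take (r - 1))
      ((σ mF : Fin (k' + 1)) : ℕ) ((permTL σ)[r - 1]'(by omega)) hxmem
    have hsplit' : permTL σ = (permTL σ).take (r - 1) ++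
        ((permTL σ)[r - 1]'(by omega)) :: (permTL σ).drop r := by
      have hh := hsplit
      rw [show (r - 1) + 1 = r from by omega] at hh
      exact hh
    rw [← hsplit'] at hFσ
    rw [hl1r] at hFσb
    have hFid := uF_id_decr cmb (k' + 1) hd (k' - 1) (by omega)
    rw [show k' - 1 + 1 = k' from by omega] at hFid
    rw [hFσ, hFid] at hent
    simp only [Option.elim] at hent
    have hF := Adj01.elem.inj hent
    have hbmem : ∀ x ∈ ((σ 0 : Fin (k' + 1)) : ℕ) :: permTL σ,
        (fun m => (k' + 1) - m) x ≤ (k' + 1) ∧ (fun m => m) x ≤ (k' + 1) := by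
      intro x hx
      have hxle : x ≤ k' := by
        rcases List.mem_cons.mp hx with rfl | hx'
        · exact Fin.is_le _
        · rw [permTL] at hx'
          obtain ⟨i, hi⟩ := List.mem_ofFn.mp hx'
          rw [← hi]; exact Fin.is_le _
      refine ⟨?_, ?_⟩
      · show (k' + 1) - x ≤ k' + 1
        omega
      · show x ≤ k' + 1
        omega
    have hFb2 := (uF_bound cmb (fun m => (k' + 1) - m) (fun m => m) (Or.inr hd)
      (k' + 1) (permTL σ) ((σ 0 : Fin (k' + 1)) : ℕ) hbmem).2 Fσ hFσ
    have hFeq := hinj Fσ ((k' + 1) + 2) (by omega) (by omega) hF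
    have hx : (mF : ℕ) + 1 ≤ ((σ mF : Fin (k' + 1)) : ℕ) := hup
    have hxle2 : ((σ mF : Fin (k' + 1)) : ℕ) ≤ k' := by
      have := (σ mF).isLt; omega
    have hmFle : (mF : ℕ) ≤ k' := by have := mF.isLt; omega
    have hFσb' : Fσ ≤ ((k' + 1) - ((σ mF : Fin (k' + 1)) : ℕ)) + (mF : ℕ) + 1 := hFσb
    omega

lemma uMat_one_subsingleton : ∀ A B : UMat S 1, A = B := by
  intro A B
  apply Subtype.ext
  funext i j
  have hi : i = 0 := Subsingleton.elim i 0
  have hj : j = 0 := Subsingleton.elim j 0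
  subst hi hj
  rw [A.2.2.1 0, B.2.2.1 0]

lemma swap01_ne_refl : Equiv.swap (0 : Fin 2) 1 ≠ Equiv.refl (Fin 2) := by
  intro hcon
  have h1 : (Equiv.swap (0 : Fin 2) 1) 0 = 1 := Equiv.swap_apply_left 0 1
  rw [hcon] at h1
  exact absurd h1 (by decide)

lemma finProd_two {T : Type*} [Mul T] (t : Fin 2 → T) : finProd t = some (t 0 * t 1) := by
  show (List.ofFn t).foldl (optStep (· * ·)) none = _
  rw [List.ofFn_succ, List.ofFn_succ, List.ofFn_zero]
  rfl

lemma SP_UMat1 : StronglyPermutable (UMat S 1) := by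
  refine ⟨2, le_rfl, fun s => ⟨Equiv.swap 0 1, swap01_ne_refl, ?_⟩⟩
  congr 1
  funext i
  exact uMat_one_subsingleton _ _

lemma uMat2_comm (A B : UMat S 2) : A * B = B * A := by
  apply Subtype.ext
  have hAB : ∀ (X Y : UMat S 2) (i j : Fin 2),
      (X * Y).1 i j = X.1 i 0 * Y.1 0 j + X.1 i 1 * Y.1 1 j := by
    intro X Y i j
    show matMul X.1 Y.1 i j = _
    rw [matMul_entry (by omega), Fin.sum_univ_two]
  funext i j
  rw [hAB, hAB]
  obtain ⟨hAb, hAd, _⟩ := A.2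
  obtain ⟨hBb, hBd, _⟩ := B.2
  have hA10 : A.1 1 0 = Adj01.zero := hAb 1 0 (by decide)
  have hB10 : B.1 1 0 = Adj01.zero := hBb 1 0 (by decide)
  have hfin : ∀ z : Fin 2, z = 0 ∨ z = 1 := by decide
  rcases hfin i with rfl | rfl <;> rcases hfin j with rfl | rfl <;>
    simp [hAd 0, hAd 1, hBd 0, hBd 1, hA10, hB10] <;>
    first
    | rfl
    | exact add_comm _ _

lemma SP_UMat2 : StronglyPermutable (UMat S 2) := by
  refine ⟨2, le_rfl, fun s => ⟨Equiv.swap 0 1, swap01_ne_refl, ?_⟩⟩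
  rw [finProd_two, finProd_two]
  have e0 : Equiv.swap (0 : Fin 2) 1 0 = 1 := Equiv.swap_apply_left 0 1
  have e1 : Equiv.swap (0 : Fin 2) 1 1 = 0 := Equiv.swap_apply_right 0 1
  rw [e0, e1, uMat2_comm]

end Stmt9UEnd



/-- if a (not necessarily commutative) bipotent semiring has elements of
unbounded multiplicative order (for each `k` there is an element whose set of positive
powers is infinite, or finite of cardinality exceeding `k`), then `M_n(S)` and
`UT_n(S)` are not strongly permutable for `n ≥ 2`, and `U_n(S)` is not strongly
permutable iff `n ≥ 3`. -/
theorem stmt_9 {S : Type*} [BipotentSemiring S]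
    (h : ∀ k : ℕ, ∃ x : S,
      (Set.range (mpow x)).Infinite ∨ k < (Set.range (mpow x)).ncard) :
    (∀ n : ℕ, 2 ≤ n →
      ¬ StronglyPermutable (MatSR S n) ∧ ¬ StronglyPermutable (UTMat S n)) ∧
    (∀ n : ℕ, 0 < n → (¬ StronglyPermutable (UMat S n) ↔ 3 ≤ n)) := by
  constructor
  · intro n hn
    exact ⟨not_SP_matSR hn h, not_SP_UTMat hn h⟩
  · intro n hn
    constructor
    · intro hnsp
      by_contra hlt
      push_neg at hlt
      interval_cases n
      · exact hnsp SP_UMat1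
      · exact hnsp SP_UMat2
    · intro h3
      exact not_SP_UMat3 h3 h
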